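/- arXiv:1304.7145 — 5 statements merged into one kernel-verified Lean document; each statement's English description precedes it below -/
import Mathlib

section
/- Let 0 ≤ α < 1 and let ψ : ℝ → ℝ satisfy |ψ(x) − A·x| ≤ B(1 + |x|^α) for all x, with A, B > 0. Define r(x) = sign(x)·|x|^{1−α}. Then the conjugate function ψ_r = r ∘ ψ ∘ r⁻¹ satisfies |ψ_r(x) − A^{1−α}·x| ≤ B₀ for all x ∈ ℝ, for some constant B₀ satisfying log⁺ B₀ ≤ C_α (|log A| + log⁺ B + 1), where C_α depends only on α. -/
open Real

/-- The odd power map `r(x) = sign(x)·|x|^{1-α}`. -/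
noncomputable def rPow (α : ℝ) (x : ℝ) : ℝ := Real.sign x * |x| ^ (1 - α)

/-- Its inverse `r⁻¹(x) = sign(x)·|x|^{1/(1-α)}`. -/
noncomputable def rPowInv (α : ℝ) (x : ℝ) : ℝ := Real.sign x * |x| ^ (1 / (1 - α))

section aux

variable {α : ℝ}

lemma rPow_of_nonneg (hβ : 0 < 1 - α) {u : ℝ} (hu : 0 ≤ u) : rPow α u = u ^ (1 - α) := by
  rcases eq_or_lt_of_le hu with h | h
  · simp [rPow, ← h, Real.sign_zero, Real.zero_rpow hβ.ne']
  · simp [rPow, Real.sign_of_pos h, abs_of_pos h]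

lemma rPow_of_neg {u : ℝ} (hu : u < 0) : rPow α u = -((-u) ^ (1 - α)) := by
  simp [rPow, Real.sign_of_neg hu, abs_of_neg hu]

/-- Subadditivity of `x ↦ x^β` on nonneg reals for `β ∈ [0,1]`. -/
lemma add_rpow_le {β a b : ℝ} (hβ0 : 0 ≤ β) (hβ1 : β ≤ 1) (ha : 0 ≤ a) (hb : 0 ≤ b) :
    (a + b) ^ β ≤ a ^ β + b ^ β := by
  lift a to NNReal using ha
  lift b to NNReal using hb
  rw [← NNReal.coe_add, ← NNReal.coe_rpow, ← NNReal.coe_rpow, ← NNReal.coe_rpow,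
    ← NNReal.coe_add, NNReal.coe_le_coe]
  exact NNReal.rpow_add_le_add_rpow a b hβ0 hβ1

lemma rpow_sub_rpow_le {β a b : ℝ} (hβ0 : 0 ≤ β) (hβ1 : β ≤ 1) (ha : 0 ≤ a) (hb : 0 ≤ b) :
    a ^ β - b ^ β ≤ |a - b| ^ β := by
  rcases le_total a b with h | h
  · have h1 : a ^ β ≤ b ^ β := Real.rpow_le_rpow ha h hβ0
    have h2 : (0:ℝ) ≤ |a - b| ^ β := Real.rpow_nonneg (abs_nonneg _) _
    linarith
  · have h1 : a ^ β ≤ b ^ β + (a - b) ^ β := by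
      have := add_rpow_le hβ0 hβ1 hb (sub_nonneg.2 h)
      calc a ^ β = (b + (a - b)) ^ β := by ring_nf
        _ ≤ b ^ β + (a - b) ^ β := this
    rw [abs_of_nonneg (sub_nonneg.2 h)]
    linarith

lemma rPow_sub_le (hα0 : 0 ≤ α) (hα1 : α < 1) (u v : ℝ) :
    rPow α u - rPow α v ≤ 2 * |u - v| ^ (1 - α) := by
  have hβ : (0:ℝ) < 1 - α := by linarith
  have hβ1 : 1 - α ≤ 1 := by linarith
  have hnn : (0:ℝ) ≤ |u - v| ^ (1 - α) := Real.rpow_nonneg (abs_nonneg _) _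
  rcases le_or_gt 0 u with hu | hu <;> rcases le_or_gt 0 v with hv | hv
  · rw [rPow_of_nonneg hβ hu, rPow_of_nonneg hβ hv]
    have := rpow_sub_rpow_le hβ.le hβ1 hu hv
    linarith
  · rw [rPow_of_nonneg hβ hu, rPow_of_neg hv]
    have h1 : u ^ (1 - α) ≤ |u - v| ^ (1 - α) := by
      apply Real.rpow_le_rpow hu _ hβ.le
      rw [abs_of_nonneg (by linarith)]; linarith
    have h2 : (-v) ^ (1 - α) ≤ |u - v| ^ (1 - α) := by
      apply Real.rpow_le_rpow (by linarith) _ hβ.le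
      rw [abs_of_nonneg (by linarith)]; linarith
    linarith
  · rw [rPow_of_neg hu, rPow_of_nonneg hβ hv]
    have h1 : (0:ℝ) ≤ (-u) ^ (1 - α) := Real.rpow_nonneg (by linarith) _
    have h2 : (0:ℝ) ≤ v ^ (1 - α) := Real.rpow_nonneg hv _
    linarith
  · rw [rPow_of_neg hu, rPow_of_neg hv]
    have h1 : (-v) ^ (1 - α) - (-u) ^ (1 - α) ≤ |(-v) - (-u)| ^ (1 - α) :=
      rpow_sub_rpow_le hβ.le hβ1 (by linarith) (by linarith)
    have h2 : |(-v) - (-u)| = |u - v| := by rw [show (-v) - (-u) = u - v by ring]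
    rw [h2] at h1
    linarith

lemma rPow_dist_le (hα0 : 0 ≤ α) (hα1 : α < 1) (u v : ℝ) :
    |rPow α u - rPow α v| ≤ 2 * |u - v| ^ (1 - α) := by
  rw [abs_sub_le_iff]
  refine ⟨rPow_sub_le hα0 hα1 u v, ?_⟩
  have := rPow_sub_le hα0 hα1 v u
  rwa [abs_sub_comm] at this

lemma rPow_mul_pos {A : ℝ} (hA : 0 < A) (y : ℝ) :
    rPow α (A * y) = A ^ (1 - α) * rPow α y := by
  have hs : Real.sign (A * y) = Real.sign y := by
    rcases lt_trichotomy y 0 with h | h | h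
    · rw [Real.sign_of_neg h, Real.sign_of_neg (mul_neg_of_pos_of_neg hA h)]
    · simp [h]
    · rw [Real.sign_of_pos h, Real.sign_of_pos (mul_pos hA h)]
  unfold rPow
  rw [hs, abs_mul, abs_of_pos hA, Real.mul_rpow hA.le (abs_nonneg y)]
  ring

lemma rPow_rPowInv (hα1 : α < 1) (x : ℝ) : rPow α (rPowInv α x) = x := by
  have hβ : (0:ℝ) < 1 - α := by linarith
  rcases lt_trichotomy x 0 with hx | hx | hx
  · have h1 : rPowInv α x = -((-x) ^ (1 / (1 - α))) := by
      simp [rPowInv, Real.sign_of_neg hx, abs_of_neg hx]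
    have h2 : (0:ℝ) < (-x) ^ (1 / (1 - α)) := Real.rpow_pos_of_pos (by linarith) _
    rw [h1, rPow_of_neg (by linarith), neg_neg,
      ← Real.rpow_mul (by linarith : (0:ℝ) ≤ -x), one_div,
      inv_mul_cancel₀ hβ.ne', Real.rpow_one, neg_neg]
  · subst hx; simp [rPowInv, rPow, Real.sign_zero]
  · have h1 : rPowInv α x = x ^ (1 / (1 - α)) := by
      simp [rPowInv, Real.sign_of_pos hx, abs_of_pos hx]
    have h2 : (0:ℝ) < x ^ (1 / (1 - α)) := Real.rpow_pos_of_pos hx _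
    rw [h1, rPow_of_nonneg hβ h2.le, ← Real.rpow_mul hx.le, one_div,
      inv_mul_cancel₀ hβ.ne', Real.rpow_one]

/-- Key mean-value type bound: `u^β ≤ v^(β-1) * u` hence
`u^β - v^β ≤ v^(β-1) (u - v)` for `0 < v ≤ u`, `β ≤ 1`. -/
lemma rpow_sub_le_of_le {β u v : ℝ} (hβ1 : β ≤ 1) (hv : 0 < v) (hvu : v ≤ u) :
    u ^ β - v ^ β ≤ v ^ (β - 1) * (u - v) := by
  have hu : 0 < u := hv.trans_le hvu
  have hq : (1:ℝ) ≤ u / v := by rw [le_div_iff₀ hv]; linarith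
  have h1 : u ^ β = v ^ β * (u / v) ^ β := by
    rw [← Real.mul_rpow hv.le (by positivity)]
    congr 1
    field_simp
  have h2 : (u / v) ^ β ≤ u / v := by
    calc (u / v) ^ β ≤ (u / v) ^ (1:ℝ) := Real.rpow_le_rpow_of_exponent_le hq hβ1
      _ = u / v := Real.rpow_one _
  have h3 : v ^ (β - 1) = v ^ β / v := by
    rw [Real.rpow_sub hv, Real.rpow_one]
  have hvb : (0:ℝ) < v ^ β := Real.rpow_pos_of_pos hv _
  have h4 : u ^ β ≤ v ^ (β - 1) * u := by
    rw [h1, h3]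
    rw [div_mul_eq_mul_div, le_div_iff₀ hv]
    calc v ^ β * (u / v) ^ β * v ≤ v ^ β * (u / v) * v := by
          have := mul_le_mul_of_nonneg_left h2 hvb.le
          nlinarith
      _ = v ^ β * u := by field_simp
  have h5 : v ^ (β - 1) * v = v ^ β := by
    rw [h3]; field_simp
  nlinarith [h4, h5]

lemma abs_rpow_sub_le {β m u v : ℝ} (hβ0 : 0 ≤ β) (hβ1 : β ≤ 1) (hm : 0 < m)
    (hu : m ≤ u) (hv : m ≤ v) :
    |u ^ β - v ^ β| ≤ m ^ (β - 1) * |u - v| := by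
  have hmu : (0:ℝ) < u := hm.trans_le hu
  have hmv : (0:ℝ) < v := hm.trans_le hv
  have key : ∀ a b : ℝ, m ≤ a → m ≤ b → b ≤ a →
      a ^ β - b ^ β ≤ m ^ (β - 1) * |a - b| := by
    intro a b ha hb hba
    have h1 : a ^ β - b ^ β ≤ b ^ (β - 1) * (a - b) :=
      rpow_sub_le_of_le hβ1 (hm.trans_le hb) hba
    have h2 : b ^ (β - 1) ≤ m ^ (β - 1) :=
      Real.rpow_le_rpow_of_nonpos hm hb (by linarith)
    have h3 : b ^ (β - 1) * (a - b) ≤ m ^ (β - 1) * (a - b) :=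
      mul_le_mul_of_nonneg_right h2 (by linarith)
    rw [abs_of_nonneg (by linarith : (0:ℝ) ≤ a - b)]
    linarith
  rcases le_total v u with h | h
  · rw [abs_of_nonneg (sub_nonneg.2 (Real.rpow_le_rpow hmv.le h hβ0))]
    exact key u v hu hv h
  · rw [abs_of_nonpos (sub_nonpos.2 (Real.rpow_le_rpow hmu.le h hβ0)), abs_sub_comm]
    have := key v u hv hu h
    linarith

/-- Core estimate in the large-`t` regime. -/
lemma core_est (hα0 : 0 ≤ α) (hα1 : α < 1) {A B t u : ℝ} (hA : 0 < A) (hB : 0 ≤ B)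
    (ht : 0 < t) (hu : A * t / 2 ≤ u) (hd : |u - A * t| ≤ 2 * B * t ^ α) :
    |u ^ (1 - α) - (A * t) ^ (1 - α)| ≤ 2 * B * (1 + 2 * A⁻¹) := by
  have hβ0 : (0:ℝ) ≤ 1 - α := by linarith
  have hβ1 : (1:ℝ) - α ≤ 1 := by linarith
  have hm : (0:ℝ) < A * t / 2 := by positivity
  have hv : A * t / 2 ≤ A * t := by nlinarith
  have h1 : |u ^ (1 - α) - (A * t) ^ (1 - α)| ≤ (A * t / 2) ^ (1 - α - 1) * |u - A * t| :=
    abs_rpow_sub_le hβ0 hβ1 hm hu hv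
  have hmp : (0:ℝ) ≤ (A * t / 2) ^ (1 - α - 1) := (Real.rpow_pos_of_pos hm _).le
  have h2 : (A * t / 2) ^ (1 - α - 1) * |u - A * t|
      ≤ (A * t / 2) ^ (1 - α - 1) * (2 * B * t ^ α) :=
    mul_le_mul_of_nonneg_left hd hmp
  have h3 : (A * t / 2) ^ (1 - α - 1) = (A / 2) ^ (1 - α - 1) * t ^ (1 - α - 1) := by
    rw [show A * t / 2 = (A / 2) * t by ring, Real.mul_rpow (by positivity) ht.le]
  have h4 : t ^ (1 - α - 1) * t ^ α = 1 := by
    rw [← Real.rpow_add ht]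
    norm_num
  have h5 : (A * t / 2) ^ (1 - α - 1) * (2 * B * t ^ α) = 2 * B * (A / 2) ^ (1 - α - 1) := by
    rw [h3]
    calc (A / 2) ^ (1 - α - 1) * t ^ (1 - α - 1) * (2 * B * t ^ α)
        = 2 * B * (A / 2) ^ (1 - α - 1) * (t ^ (1 - α - 1) * t ^ α) := by ring
      _ = 2 * B * (A / 2) ^ (1 - α - 1) := by rw [h4, mul_one]
  have h6 : (A / 2) ^ (1 - α - 1) ≤ 1 + 2 * A⁻¹ := by
    have hA2 : (0:ℝ) < A / 2 := by positivity
    have hAinv : (0:ℝ) ≤ 2 * A⁻¹ := by positivity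
    rcases le_or_gt 1 (A / 2) with h | h
    · have : (A / 2) ^ (1 - α - 1) ≤ (A / 2) ^ (0:ℝ) :=
        Real.rpow_le_rpow_of_exponent_le h (by linarith)
      rw [Real.rpow_zero] at this
      linarith
    · have : (A / 2) ^ (1 - α - 1) ≤ (A / 2) ^ (-1:ℝ) :=
        Real.rpow_le_rpow_of_exponent_ge hA2 h.le (by linarith)
      rw [Real.rpow_neg_one] at this
      have he : (A / 2)⁻¹ = 2 * A⁻¹ := by field_simp
      rw [he] at this
      linarith
  calc |u ^ (1 - α) - (A * t) ^ (1 - α)| ≤ (A * t / 2) ^ (1 - α - 1) * (2 * B * t ^ α) := by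
        linarith
    _ = 2 * B * (A / 2) ^ (1 - α - 1) := h5
    _ ≤ 2 * B * (1 + 2 * A⁻¹) := by nlinarith

end aux

set_option maxHeartbeats 1000000 in
theorem conj_asymptotically_linear (α : ℝ) (hα0 : 0 ≤ α) (hα1 : α < 1) :
    ∃ Cα : ℝ, ∀ (ψ : ℝ → ℝ) (A B : ℝ), 0 < A → 0 < B →
      (∀ x : ℝ, |ψ x - A * x| ≤ B * (1 + |x| ^ α)) →
      ∃ B₀ : ℝ, 0 < B₀ ∧
        (∀ x : ℝ, |rPow α (ψ (rPowInv α x)) - A ^ (1 - α) * x| ≤ B₀) ∧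
        max (Real.log B₀) 0 ≤ Cα * (|Real.log A| + max (Real.log B) 0 + 1) := by
  refine ⟨16, fun ψ A B hA hB h => ?_⟩
  have hβ : (0:ℝ) < 1 - α := by linarith
  have hβ1 : (1:ℝ) - α ≤ 1 := by linarith
  set M : ℝ := (A + A⁻¹) * (B + 1) with hMdef
  have hAinv : (0:ℝ) < A⁻¹ := inv_pos.2 hA
  have hAA : (2:ℝ) ≤ A + A⁻¹ := by
    nlinarith [sq_nonneg (A - 1), mul_inv_cancel₀ hA.ne']
  have hM2 : (2:ℝ) ≤ M := by nlinarith
  have hM1 : (1:ℝ) ≤ M := by linarith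
  have hM0 : (0:ℝ) < M := by linarith
  have hBM : 2 * B ≤ M := by nlinarith
  have hBAM : B * A⁻¹ ≤ M := by nlinarith
  have hM4 : M ≤ M ^ (4:ℝ) := by
    calc M = M ^ (1:ℝ) := (Real.rpow_one M).symm
      _ ≤ M ^ (4:ℝ) := Real.rpow_le_rpow_of_exponent_le hM1 (by norm_num)
  have hM4pos : (0:ℝ) < M ^ (4:ℝ) := Real.rpow_pos_of_pos hM0 _
  refine ⟨6 * M ^ (4:ℝ), by positivity, ?_, ?_⟩
  · -- the uniform bound
    have key : ∀ y : ℝ, |rPow α (ψ y) - rPow α (A * y)| ≤ 6 * M ^ (4:ℝ) := by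
      intro y
      set T : ℝ := M ^ (3 / (1 - α)) with hTdef
      have hT1 : (1:ℝ) ≤ T := by
        calc (1:ℝ) = M ^ (0:ℝ) := (Real.rpow_zero M).symm
          _ ≤ M ^ (3 / (1 - α)) := Real.rpow_le_rpow_of_exponent_le hM1 (by positivity)
      rcases le_or_gt |y| T with hyT | hyT
      · -- small case: Hölder bound
        have h1 : |rPow α (ψ y) - rPow α (A * y)| ≤ 2 * |ψ y - A * y| ^ (1 - α) :=
          rPow_dist_le hα0 hα1 _ _
        have hyα : |y| ^ α ≤ M ^ (3 * α / (1 - α)) := by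
          calc |y| ^ α ≤ T ^ α := Real.rpow_le_rpow (abs_nonneg y) hyT hα0
            _ = M ^ (3 / (1 - α) * α) := by
                rw [hTdef, ← Real.rpow_mul hM0.le]
            _ = M ^ (3 * α / (1 - α)) := by ring_nf
        have hMα1 : (1:ℝ) ≤ M ^ (3 * α / (1 - α)) := by
          calc (1:ℝ) = M ^ (0:ℝ) := (Real.rpow_zero M).symm
            _ ≤ M ^ (3 * α / (1 - α)) := Real.rpow_le_rpow_of_exponent_le hM1 (by positivity)
        have h2 : |ψ y - A * y| ≤ 2 * M ^ (1 + 3 * α / (1 - α)) := by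
          have hBb : B ≤ M := by linarith
          have hMe : (0:ℝ) ≤ M ^ (3 * α / (1 - α)) := by positivity
          calc |ψ y - A * y| ≤ B * (1 + |y| ^ α) := h y
            _ ≤ M * (2 * M ^ (3 * α / (1 - α))) := by nlinarith
            _ = 2 * (M ^ (1:ℝ) * M ^ (3 * α / (1 - α))) := by rw [Real.rpow_one]; ring
            _ = 2 * M ^ (1 + 3 * α / (1 - α)) := by rw [← Real.rpow_add hM0]
        have h3 : |ψ y - A * y| ^ (1 - α) ≤ (2 * M ^ (1 + 3 * α / (1 - α))) ^ (1 - α) :=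
          Real.rpow_le_rpow (abs_nonneg _) h2 hβ.le
        have h4 : (2 * M ^ (1 + 3 * α / (1 - α))) ^ (1 - α) ≤ 2 * M ^ (4:ℝ) := by
          rw [Real.mul_rpow (by norm_num) (by positivity), ← Real.rpow_mul hM0.le]
          have e1 : (2:ℝ) ^ (1 - α) ≤ 2 := by
            calc (2:ℝ) ^ (1 - α) ≤ (2:ℝ) ^ (1:ℝ) :=
              Real.rpow_le_rpow_of_exponent_le one_le_two hβ1
              _ = 2 := Real.rpow_one 2
          have e2 : M ^ ((1 + 3 * α / (1 - α)) * (1 - α)) ≤ M ^ (4:ℝ) := by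
            apply Real.rpow_le_rpow_of_exponent_le hM1
            have : (1 + 3 * α / (1 - α)) * (1 - α) = 1 + 2 * α := by field_simp; ring
            rw [this]; linarith
          have e3 : (0:ℝ) ≤ M ^ ((1 + 3 * α / (1 - α)) * (1 - α)) := by positivity
          nlinarith
        calc |rPow α (ψ y) - rPow α (A * y)| ≤ 2 * |ψ y - A * y| ^ (1 - α) := h1
          _ ≤ 2 * (2 * M ^ (4:ℝ)) := by linarith
          _ ≤ 6 * M ^ (4:ℝ) := by linarith
      · -- big case
        have hy1 : (1:ℝ) < |y| := lt_of_le_of_lt hT1 hyT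
        have hy0 : (0:ℝ) < |y| := by linarith
        have hyα1 : (1:ℝ) ≤ |y| ^ α := by
          calc (1:ℝ) = (1:ℝ) ^ α := (Real.one_rpow α).symm
            _ ≤ |y| ^ α := Real.rpow_le_rpow zero_le_one hy1.le hα0
        have hyαpos : (0:ℝ) < |y| ^ α := by linarith
        have key1 : |ψ y - A * y| ≤ 2 * B * |y| ^ α := by
          calc |ψ y - A * y| ≤ B * (1 + |y| ^ α) := h y
            _ ≤ 2 * B * |y| ^ α := by nlinarith
        have hTβ : M ^ (3:ℝ) ≤ |y| ^ (1 - α) := by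
          calc M ^ (3:ℝ) = (M ^ (3 / (1 - α))) ^ (1 - α) := by
                rw [← Real.rpow_mul hM0.le]
                congr 1
                field_simp
            _ ≤ |y| ^ (1 - α) := Real.rpow_le_rpow (by positivity) hyT.le hβ.le
        have hM3 : 4 * M ≤ M ^ (3:ℝ) := by
          rw [show (3:ℝ) = ((3:ℕ):ℝ) by norm_num, Real.rpow_natCast]
          have hcube : M ^ (3:ℕ) = M * M * M := by ring
          nlinarith [hM2, hM0]
        have e2 : 4 * B ≤ A * |y| ^ (1 - α) := by
          have hBA : B ≤ M * A := by
            have h := mul_le_mul_of_nonneg_right hBAM hA.le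
            rwa [mul_assoc, inv_mul_cancel₀ hA.ne', mul_one] at h
          have h41 : 4 * B ≤ 4 * M * A := by nlinarith
          have h42 : 4 * M * A ≤ M ^ (3:ℝ) * A := by nlinarith
          have h43 : M ^ (3:ℝ) * A ≤ |y| ^ (1 - α) * A :=
            mul_le_mul_of_nonneg_right hTβ hA.le
          nlinarith
        have eyy : |y| ^ (1 - α) * |y| ^ α = |y| := by
          rw [← Real.rpow_add hy0]
          norm_num
        have h4BA : 2 * B * |y| ^ α ≤ A * |y| / 2 := by
          have : 4 * B * |y| ^ α ≤ A * |y| ^ (1 - α) * |y| ^ α :=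
            mul_le_mul_of_nonneg_right e2 hyαpos.le
          rw [mul_assoc A, eyy] at this
          linarith
        have key2 : |ψ y - A * y| ≤ A * |y| / 2 := key1.trans h4BA
        have habs := abs_le.mp key2
        rcases lt_trichotomy y 0 with hy | hy | hy
        · -- y < 0
          have hyy : |y| = -y := abs_of_neg hy
          rw [hyy] at habs key1
          have hAy : A * y < 0 := mul_neg_of_pos_of_neg hA hy
          have hψ : ψ y ≤ A * y / 2 := by nlinarith [habs.2]
          have hψneg : ψ y < 0 := by nlinarith
          have hmu : A * (-y) / 2 ≤ -ψ y := by nlinarith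
          have hd : |(-ψ y) - A * (-y)| ≤ 2 * B * (-y) ^ α := by
            rw [show (-ψ y) - A * (-y) = -(ψ y - A * y) by ring, abs_neg]
            exact key1
          have hcore := core_est hα0 hα1 hA hB.le (by linarith : (0:ℝ) < -y) hmu hd
          have hrw : |rPow α (ψ y) - rPow α (A * y)|
              = |(-ψ y) ^ (1 - α) - (A * (-y)) ^ (1 - α)| := by
            rw [rPow_of_neg hψneg, rPow_of_neg hAy,
              show -(A * y) = A * (-y) from by ring, ← abs_neg]
            congr 1
            ring
          rw [hrw]
          have hfin : 2 * B * (1 + 2 * A⁻¹) ≤ 6 * M := by nlinarith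
          calc |(-ψ y) ^ (1 - α) - (A * (-y)) ^ (1 - α)| ≤ 2 * B * (1 + 2 * A⁻¹) := hcore
            _ ≤ 6 * M := hfin
            _ ≤ 6 * M ^ (4:ℝ) := by linarith
        · exfalso; rw [hy] at hy0; simp at hy0
        · -- y > 0
          have hyy : |y| = y := abs_of_pos hy
          rw [hyy] at habs key1
          have hψ : A * y / 2 ≤ ψ y := by nlinarith [habs.1]
          have hψpos : 0 < ψ y := by nlinarith
          have hAy : 0 < A * y := mul_pos hA hy
          have hcore := core_est hα0 hα1 hA hB.le hy hψ key1
          rw [rPow_of_nonneg hβ hψpos.le, rPow_of_nonneg hβ hAy.le]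
          have hfin : 2 * B * (1 + 2 * A⁻¹) ≤ 6 * M := by nlinarith
          calc |ψ y ^ (1 - α) - (A * y) ^ (1 - α)| ≤ 2 * B * (1 + 2 * A⁻¹) := hcore
            _ ≤ 6 * M := hfin
            _ ≤ 6 * M ^ (4:ℝ) := by linarith
    intro x
    have hrw : A ^ (1 - α) * x = rPow α (A * rPowInv α x) := by
      rw [rPow_mul_pos hA, rPow_rPowInv hα1]
    rw [hrw]
    exact key (rPowInv α x)
  · -- the log estimate
    have hlogB₀ : Real.log (6 * M ^ (4:ℝ)) = Real.log 6 + 4 * Real.log M := by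
      rw [Real.log_mul (by norm_num) hM4pos.ne', Real.log_rpow hM0]
    have hlogM : Real.log M = Real.log (A + A⁻¹) + Real.log (B + 1) := by
      rw [hMdef, Real.log_mul (by positivity) (by positivity)]
    have hlog1 : Real.log (A + A⁻¹) ≤ Real.log 2 + |Real.log A| := by
      have h1 : A + A⁻¹ ≤ 2 * max A A⁻¹ := by
        have := le_max_left A A⁻¹
        have := le_max_right A A⁻¹
        linarith
      have h2 : Real.log (A + A⁻¹) ≤ Real.log (2 * max A A⁻¹) :=
        Real.log_le_log (by positivity) h1
      have h3 : Real.log (2 * max A A⁻¹) = Real.log 2 + Real.log (max A A⁻¹) :=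
        Real.log_mul (by norm_num) (by positivity)
      have h4 : Real.log (max A A⁻¹) = |Real.log A| := by
        rcases le_total A A⁻¹ with hc | hc
        · rw [max_eq_right hc]
          have hA1 : A ≤ 1 := by nlinarith [mul_inv_cancel₀ hA.ne']
          rw [Real.log_inv, abs_of_nonpos (Real.log_nonpos hA.le hA1)]
        · rw [max_eq_left hc]
          have hA1 : 1 ≤ A := by nlinarith [mul_inv_cancel₀ hA.ne']
          rw [abs_of_nonneg (Real.log_nonneg hA1)]
      linarith
    have hlog2 : Real.log (B + 1) ≤ Real.log 2 + max (Real.log B) 0 := by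
      have h1 : B + 1 ≤ 2 * max B 1 := by
        have := le_max_left B 1
        have := le_max_right B 1
        linarith
      have h2 : Real.log (B + 1) ≤ Real.log (2 * max B 1) :=
        Real.log_le_log (by positivity) h1
      have h3 : Real.log (2 * max B 1) = Real.log 2 + Real.log (max B 1) :=
        Real.log_mul (by norm_num) (by positivity)
      have h4 : Real.log (max B 1) = max (Real.log B) 0 := by
        rcases le_total B 1 with hc | hc
        · rw [max_eq_right hc, Real.log_one,
            max_eq_right (Real.log_nonpos hB.le hc)]
        · rw [max_eq_left hc, max_eq_left (Real.log_nonneg hc)]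
      linarith
    have hlog6 : Real.log 6 ≤ 5 := by
      nlinarith [Real.log_le_sub_one_of_pos (by norm_num : (0:ℝ) < 6)]
    have hlogtwo : Real.log 2 ≤ 1 := by
      nlinarith [Real.log_le_sub_one_of_pos (by norm_num : (0:ℝ) < 2)]
    have habsA : (0:ℝ) ≤ |Real.log A| := abs_nonneg _
    have hmaxB : (0:ℝ) ≤ max (Real.log B) 0 := le_max_right _ _
    apply max_le
    · calc Real.log (6 * M ^ (4:ℝ)) = Real.log 6 + 4 * Real.log M := hlogB₀
        _ ≤ 16 * (|Real.log A| + max (Real.log B) 0 + 1) := by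
          rw [hlogM] at *
          linarith
    · positivity
end

section
/- Let (Ψ_n) be i.i.d. random continuous maps of ℝ with law μ, and let ν be a Radon measure on ℝ that is μ-invariant, i.e. ∫∫ f(ψ(x)) ν(dx) μ(dψ) = ∫ f dν for all compactly supported continuous f. Then for any pair of intervals V, U ⊂ ℝ, ν(V) ≥ P(T_𝔚 < ∞) · ν(U), where 𝔚 = {ψ : ψ(U) ⊂ V} and T_𝔚 = inf{n ≥ 0 : Ψ₁∘⋯∘Ψ_n ∈ 𝔚}. -/
open MeasureTheory ProbabilityTheory

/-- The backward composition `Ψ₁ ∘ ⋯ ∘ Ψ_n` (with `Ψ` indexed from `0`). -/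
def backComp {Ω : Type*} (Ψ : ℕ → Ω → ℝ → ℝ) (ω : Ω) : ℕ → ℝ → ℝ
  | 0 => id
  | n + 1 => backComp Ψ ω n ∘ Ψ n ω

/-!
Let `M n ω = ν ((Ψ₁ ∘ ⋯ ∘ Ψ_n)⁻¹ V)`, so that `M 0 = ν V`. Since `Ψ_{n+1}` is independent of
`Ψ₁, …, Ψ_n` and leaves `ν` invariant, `∫_s M (n + 1) dP = ∫_s M n dP` for every event `s`
determined by `Ψ₁, …, Ψ_n`: `M` is a martingale (possibly with infinite values). On the event
`{Ψ₁ ∘ ⋯ ∘ Ψ_n ∈ 𝔚}` we have `M n ≥ ν U`, and optional stopping at the first such `n` gives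
`P(T_𝔚 < ∞) ν U ≤ ν V`. Continuity of the maps, after a modification on a null set, makes
`(ω, x) ↦ Ψ_n ω x` jointly measurable (for Fubini) and the events `{Ψ₁ ∘ ⋯ ∘ Ψ_n ∈ 𝔚}` measurable
(test `U` on a countable dense subset, `V` being closed).
-/

open scoped ENNReal
open TopologicalSpace

namespace MeasureTheory

section OptionalStopping

variable {Ω : Type*} {mΩ : MeasurableSpace Ω} {P : Measure Ω} {ℱ : Filtration ℕ mΩ}
  {M : ℕ → Ω → ℝ≥0∞}

theorem setLIntegral_eq_of_le
    (hmart : ∀ n s, MeasurableSet[ℱ n] s → ∫⁻ ω in s, M (n + 1) ω ∂P = ∫⁻ ω in s, M n ω ∂P)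
    {n k : ℕ} (hnk : n ≤ k) {s : Set Ω} (hs : MeasurableSet[ℱ n] s) :
    ∫⁻ ω in s, M k ω ∂P = ∫⁻ ω in s, M n ω ∂P := by
  induction k, hnk using Nat.le_induction with
  | base => rfl
  | succ k hnk ih => rw [hmart k s (ℱ.mono hnk s hs), ih]

theorem measure_iUnion_mul_le_lintegral
    (hmart : ∀ n s, MeasurableSet[ℱ n] s → ∫⁻ ω in s, M (n + 1) ω ∂P = ∫⁻ ω in s, M n ω ∂P)
    {G : ℕ → Set Ω} (hG : ∀ n, MeasurableSet[ℱ n] (G n)) {c : ℝ≥0∞}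
    (hc : ∀ n, ∀ ω ∈ G n, c ≤ M n ω) :
    P (⋃ n, G n) * c ≤ ∫⁻ ω, M 0 ω ∂P := by
  have hA : ∀ n, MeasurableSet[ℱ n] (disjointed G n) := fun n => by
    rw [disjointed_eq_inter_compl]
    exact (hG n).inter <| .biInter (Set.to_countable _) fun k hk =>
      (ℱ.mono (Nat.le_of_lt hk) _ (hG k)).compl
  have hAm : ∀ n, MeasurableSet (disjointed G n) := fun n => ℱ.le n _ (hA n)
  rw [← iUnion_disjointed, measure_iUnion (disjoint_disjointed G) hAm, ← ENNReal.tsum_mul_right]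
  refine ENNReal.tsum_le_of_sum_range_le fun N => ?_
  calc ∑ n ∈ Finset.range N, P (disjointed G n) * c
      = ∑ n ∈ Finset.range N, ∫⁻ _ in disjointed G n, c ∂P := by simp [mul_comm]
    _ ≤ ∑ n ∈ Finset.range N, ∫⁻ ω in disjointed G n, M n ω ∂P := by
        refine Finset.sum_le_sum fun n _ => ?_
        exact setLIntegral_mono' (hAm n) fun ω hω => hc n ω (disjointed_subset G n hω)
    _ = ∑ n ∈ Finset.range N, ∫⁻ ω in disjointed G n, M N ω ∂P := by
        refine Finset.sum_congr rfl fun n hn => ?_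
        exact (setLIntegral_eq_of_le hmart (Finset.mem_range.mp hn).le (hA n)).symm
    _ = ∫⁻ ω in ⋃ n ∈ Finset.range N, disjointed G n, M N ω ∂P :=
        (lintegral_biUnion_finset ((disjoint_disjointed G).set_pairwise _)
          (fun n _ => hAm n) _).symm
    _ ≤ ∫⁻ ω, M N ω ∂P := setLIntegral_le_lintegral _ _
    _ = ∫⁻ ω, M 0 ω ∂P := by
        simpa using setLIntegral_eq_of_le hmart (Nat.zero_le N) MeasurableSet.univ

end OptionalStopping

section Independence

variable {Ω X : Type*} {m mΩ : MeasurableSpace Ω} [MeasurableSpace X] {P : Measure Ω}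
  {ν : Measure X}

lemma lintegral_measure_setOf_mem_and {A : Set Ω} (hA : MeasurableSet A) (t : Ω → Set X) :
    ∫⁻ ω, ν {x | ω ∈ A ∧ x ∈ t ω} ∂P = ∫⁻ ω in A, ν (t ω) ∂P := by
  rw [← lintegral_indicator hA]
  refine lintegral_congr fun ω => ?_
  by_cases hω : ω ∈ A <;> simp [hω]

lemma lintegral_measure_setOf_comm [SFinite P] [SFinite ν] {p : Ω → X → Prop}
    (hp : MeasurableSet {q : Ω × X | p q.1 q.2}) :
    ∫⁻ ω, ν {x | p ω x} ∂P = ∫⁻ x, P {ω | p ω x} ∂ν :=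
  (Measure.prod_apply hp).symm.trans (Measure.prod_apply_symm hp)

lemma lintegral_measure_preimage_eq_lintegral_measure_setOf [SFinite P] [SFinite ν]
    {ψ : Ω → X → X} (hψ : Measurable (Function.uncurry ψ)) {B : Set X} (hB : MeasurableSet B) :
    ∫⁻ ω, ν (ψ ω ⁻¹' B) ∂P = ∫⁻ x, P.map ψ {f | f x ∈ B} ∂ν := by
  refine (lintegral_measure_setOf_comm (p := fun ω x => ψ ω x ∈ B) (hψ hB)).trans
    (lintegral_congr fun x => ?_)
  exact (Measure.map_apply (measurable_pi_lambda ψ fun _ => hψ.of_uncurry_right)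
    (measurable_pi_apply x hB)).symm

lemma lintegral_measure_preimage_congr [SFinite P] [SFinite ν] {ψ φ : Ω → X → X}
    (hψ : Measurable (Function.uncurry ψ)) (hφ : Measurable (Function.uncurry φ))
    (h : P.map ψ = P.map φ) {B : Set X} (hB : MeasurableSet B) :
    ∫⁻ ω, ν (ψ ω ⁻¹' B) ∂P = ∫⁻ ω, ν (φ ω ⁻¹' B) ∂P := by
  rw [lintegral_measure_preimage_eq_lintegral_measure_setOf hψ hB,
    lintegral_measure_preimage_eq_lintegral_measure_setOf hφ hB, h]

lemma setLIntegral_measure_preimage_of_indep [IsFiniteMeasure P] [SFinite ν]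
    (hm : m ≤ mΩ) {ψ : Ω → X → X} (hψ : Measurable (Function.uncurry ψ))
    (hindep : Indep m (MeasurableSpace.comap ψ MeasurableSpace.pi) P)
    {A : Set Ω} (hA : MeasurableSet[m] A) {B : Set X} (hB : MeasurableSet B) :
    ∫⁻ ω in A, ν (ψ ω ⁻¹' B) ∂P = P A * ∫⁻ ω, ν (ψ ω ⁻¹' B) ∂P := by
  have hs : MeasurableSet {p : Ω × X | p.1 ∈ A ∧ ψ p.1 p.2 ∈ B} :=
    (measurable_fst (hm A hA)).inter (hψ hB)
  have hsplit : ∀ x, P {ω | ω ∈ A ∧ ψ ω x ∈ B} = P A * P {ω | ψ ω x ∈ B} := fun x =>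
    (Indep_iff _ _ _).mp hindep A _ hA ⟨{f | f x ∈ B}, measurable_pi_apply x hB, rfl⟩
  have hslice : ∫⁻ ω, ν (ψ ω ⁻¹' B) ∂P = ∫⁻ x, P {ω | ψ ω x ∈ B} ∂ν :=
    lintegral_measure_setOf_comm (p := fun ω x => ψ ω x ∈ B) (hψ hB)
  calc ∫⁻ ω in A, ν (ψ ω ⁻¹' B) ∂P
      = ∫⁻ ω, ν {x | ω ∈ A ∧ x ∈ ψ ω ⁻¹' B} ∂P :=
        (lintegral_measure_setOf_mem_and (hm A hA) fun ω => ψ ω ⁻¹' B).symm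
    _ = ∫⁻ x, P {ω | ω ∈ A ∧ ψ ω x ∈ B} ∂ν := lintegral_measure_setOf_comm hs
    _ = P A * ∫⁻ ω, ν (ψ ω ⁻¹' B) ∂P := by
        simp_rw [hsplit, hslice]
        exact lintegral_const_mul' _ _ (measure_ne_top P A)

theorem lintegral_measure_preimage_prodMk_eq [IsFiniteMeasure P] [SigmaFinite ν]
    (hm : m ≤ mΩ) {ψ : Ω → X → X} (hψ : Measurable (Function.uncurry ψ))
    (hindep : Indep m (MeasurableSpace.comap ψ MeasurableSpace.pi) P)
    (hinv : ∀ B, MeasurableSet B → ∫⁻ ω, ν (ψ ω ⁻¹' B) ∂P = ν B)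
    {s : Set (Ω × X)} (hs : MeasurableSet[m.prod ‹_›] s) :
    ∫⁻ ω, ν ((fun x => (ω, ψ ω x)) ⁻¹' s) ∂P = ∫⁻ ω, ν (Prod.mk ω ⁻¹' s) ∂P := by
  set T : Ω × X → Ω × X := fun p => (p.1, ψ p.1 p.2)
  have hT : Measurable T := measurable_fst.prodMk hψ
  have hle : m.prod ‹_› ≤ mΩ.prod ‹_› := sup_le_sup (MeasurableSpace.comap_mono hm) le_rfl
  have hμ₁ : ∀ u, MeasurableSet[m.prod ‹_›] u →
      ((P.prod ν).map T).trim hle u = ∫⁻ ω, ν ((fun x => (ω, ψ ω x)) ⁻¹' u) ∂P := fun u hu => by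
    rw [trim_measurableSet_eq hle hu, Measure.map_apply hT (hle _ hu),
      Measure.prod_apply (hT (hle _ hu))]
    rfl
  have hμ₂ : ∀ u, MeasurableSet[m.prod ‹_›] u →
      (P.prod ν).trim hle u = ∫⁻ ω, ν (Prod.mk ω ⁻¹' u) ∂P := fun u hu => by
    rw [trim_measurableSet_eq hle hu, Measure.prod_apply (hle _ hu)]
  suffices ((P.prod ν).map T).trim hle = (P.prod ν).trim hle by
    rw [← hμ₁ s hs, ← hμ₂ s hs, this]
  refine Measure.ext_of_generateFrom_of_iUnion _ (fun k => Set.univ ×ˢ spanningSets ν k)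
    (@generateFrom_prod Ω X m _).symm (@isPiSystem_prod Ω X m _) ?_
    (fun k => Set.mem_image2_of_mem MeasurableSet.univ (measurableSet_spanningSets ν k)) ?_ ?_
  · simp_rw [← Set.prod_iUnion, iUnion_spanningSets, Set.univ_prod_univ]
  · intro k
    rw [hμ₁ _ (MeasurableSet.univ.prod (measurableSet_spanningSets ν k))]
    simp only [Set.mk_preimage_prod_right_fn_eq_if]
    exact (hinv _ (measurableSet_spanningSets ν k)).trans_ne (measure_spanningSets_lt_top ν k).ne
  · rintro _ ⟨A, hA, B, hB, rfl⟩
    rw [hμ₁ _ (hA.prod hB), hμ₂ _ (hA.prod hB)]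
    calc ∫⁻ ω, ν {x | ω ∈ A ∧ x ∈ ψ ω ⁻¹' B} ∂P
        = ∫⁻ ω in A, ν (ψ ω ⁻¹' B) ∂P := lintegral_measure_setOf_mem_and (hm A hA) _
      _ = P A * ν B := by
          rw [setLIntegral_measure_preimage_of_indep hm hψ hindep hA hB, hinv B hB]
      _ = ∫⁻ ω in A, ν B ∂P := by rw [setLIntegral_const, mul_comm]
      _ = ∫⁻ ω, ν {x | ω ∈ A ∧ x ∈ B} ∂P :=
          (lintegral_measure_setOf_mem_and (hm A hA) fun _ => B).symm

end Independence

section PastFiltration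

variable {Ω β : Type*} {mΩ : MeasurableSpace Ω} {mβ : MeasurableSpace β} {P : Measure Ω}

/-- Unlike `Filtration.natural`, time `n` only sees `Z i` for `i < n`, and no strong measurability
is required. -/
def pastFiltration (Z : ℕ → Ω → β) (hZ : ∀ n, Measurable (Z n)) : Filtration ℕ mΩ where
  seq n := ⨆ i < n, mβ.comap (Z i)
  mono' _ _ h := iSup₂_mono' fun i hi => ⟨i, hi.trans_le h, le_rfl⟩
  le' _ := iSup₂_le fun i _ => (hZ i).comap_le

variable {Z : ℕ → Ω → β} {hZ : ∀ n, Measurable (Z n)}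

lemma measurable_pastFiltration {i n : ℕ} (h : i < n) :
    Measurable[pastFiltration Z hZ n] (Z i) :=
  measurable_iff_comap_le.mpr <| le_iSup₂ (f := fun i (_ : i < n) => mβ.comap (Z i)) i h

lemma indep_pastFiltration (hindep : iIndepFun Z P) (n : ℕ) :
    Indep (pastFiltration Z hZ n) (mβ.comap (Z n)) P := by
  have := indep_iSup_of_disjoint (fun i => (hZ i).comap_le) hindep
    (S := Set.Iio n) (T := {n}) (by simp)
  simp only [Set.mem_Iio, Set.mem_singleton_iff, iSup_iSup_eq_left] at this
  exact this

end PastFiltration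

section ContinuousMaps

variable {Ω X Y : Type*} {mΩ : MeasurableSpace Ω} {P : Measure Ω}

lemma measurable_uncurry_of_continuous_right [TopologicalSpace X] [MetrizableSpace X]
    [MeasurableSpace X] [SecondCountableTopology X] [OpensMeasurableSpace X] [TopologicalSpace Y]
    [MeasurableSpace Y] [PseudoMetrizableSpace Y] [BorelSpace Y] {f : Ω → X → Y}
    (hc : ∀ ω, Continuous (f ω)) (hm : ∀ x, Measurable fun ω => f ω x) :
    Measurable (Function.uncurry f) :=
  (measurable_uncurry_of_continuous_of_measurable (u := fun x ω => f ω x) hc hm).comp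
    measurable_swap

lemma measurableSet_mapsTo [TopologicalSpace X] [SeparableSpace X] [PseudoMetrizableSpace X]
    [TopologicalSpace Y] [MeasurableSpace Y] [OpensMeasurableSpace Y] {f : Ω → X → Y}
    (hc : ∀ ω, Continuous (f ω)) (hm : ∀ x, Measurable fun ω => f ω x) (U : Set X) {V : Set Y}
    (hV : IsClosed V) : MeasurableSet {ω | Set.MapsTo (f ω) U V} := by
  obtain ⟨D, hDU, hD, hUD⟩ := (IsSeparable.of_separableSpace U).exists_countable_dense_subset
  have hiff : ∀ ω, Set.MapsTo (f ω) U V ↔ ∀ d ∈ D, f ω d ∈ V := fun ω =>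
    ⟨fun h => h.mono_left hDU, fun h => (Set.MapsTo.closure_left h (hc ω) hV).mono_left hUD⟩
  simp_rw [hiff, Set.ofPred_forall]
  exact .biInter hD fun d _ => hm d hV.measurableSet

lemma exists_continuous_modification [TopologicalSpace X] [MeasurableSpace X] {ι : Type*}
    {Ψ : ι → Ω → X → X} (hmeas : ∀ n, Measurable (Ψ n))
    (hcont : ∀ᵐ ω ∂P, ∀ n, Continuous (Ψ n ω)) :
    ∃ Ψ' : ι → Ω → X → X, (∀ n, Measurable (Ψ' n)) ∧ (∀ ω n, Continuous (Ψ' n ω)) ∧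
      ∀ᵐ ω ∂P, ∀ n, Ψ' n ω = Ψ n ω := by
  classical
  set t := toMeasurable P {ω | ¬ ∀ n, Continuous (Ψ n ω)}
  refine ⟨fun n => t.piecewise (fun _ => id) (Ψ n), fun n =>
    Measurable.piecewise (measurableSet_toMeasurable P _) measurable_const (hmeas n), ?_, ?_⟩
  · intro ω n
    by_cases hω : ω ∈ t
    · simpa [Set.piecewise_eq_of_mem _ _ _ hω] using continuous_id
    · simp only [Set.piecewise_eq_of_notMem _ _ _ hω]
      by_contra h
      exact hω (subset_toMeasurable P _ fun hall => h (hall n))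
  · have ht : P t = 0 := by rw [measure_toMeasurable]; exact hcont
    filter_upwards [measure_eq_zero_iff_ae_notMem.mp ht] with ω hω n
    exact Set.piecewise_eq_of_notMem _ _ _ hω

end ContinuousMaps

end MeasureTheory

section backComp

variable {Ω : Type*} {mΩ : MeasurableSpace Ω} {Ψ Φ : ℕ → Ω → ℝ → ℝ}

lemma backComp_congr {ω : Ω} (h : ∀ n, Ψ n ω = Φ n ω) : backComp Ψ ω = backComp Φ ω := by
  funext n
  induction n with
  | zero => rfl
  | succ n ih => rw [backComp, backComp, ih, h n]

lemma continuous_backComp {ω : Ω} (hc : ∀ n, Continuous (Ψ n ω)) (n : ℕ) :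
    Continuous (backComp Ψ ω n) := by
  induction n with
  | zero => exact continuous_id
  | succ n ih => exact ih.comp (hc n)

lemma measurable_backComp_uncurry (hc : ∀ ω n, Continuous (Ψ n ω))
    {N : ℕ} (hΨ : ∀ i < N, ∀ x, Measurable fun ω => Ψ i ω x) :
    Measurable fun p : Ω × ℝ => backComp Ψ p.1 N p.2 := by
  induction N with
  | zero => exact measurable_snd
  | succ N ih =>
    have hstep : Measurable fun p : Ω × ℝ => (p.1, Ψ N p.1 p.2) :=
      measurable_fst.prodMk <|
        measurable_uncurry_of_continuous_right (fun ω => hc ω N) (hΨ N N.lt_succ_self)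
    exact (ih fun i hi => hΨ i (hi.trans N.lt_succ_self)).comp hstep

lemma measurable_backComp_uncurry_pastFiltration (hmeas : ∀ n, Measurable (Ψ n))
    (hc : ∀ ω n, Continuous (Ψ n ω)) (n : ℕ) :
    Measurable[(pastFiltration Ψ hmeas n).prod Real.measurableSpace]
      fun p : Ω × ℝ => backComp Ψ p.1 n p.2 :=
  measurable_backComp_uncurry hc fun _ hi x =>
    (measurable_pi_apply x).comp (measurable_pastFiltration hi)

end backComp

section RandomDynamics

variable {Ω : Type*} {mΩ : MeasurableSpace Ω} {P : Measure Ω} {Ψ : ℕ → Ω → ℝ → ℝ}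
  {ν : Measure ℝ} {V : Set ℝ}

theorem setLIntegral_measure_backComp_preimage_succ [IsFiniteMeasure P] [SigmaFinite ν]
    (hmeas : ∀ n, Measurable (Ψ n)) (hindep : iIndepFun Ψ P)
    (hident : ∀ n, P.map (Ψ n) = P.map (Ψ 0)) (hc : ∀ ω n, Continuous (Ψ n ω))
    (hinv : ∀ B : Set ℝ, MeasurableSet B → ∫⁻ ω, ν (Ψ 0 ω ⁻¹' B) ∂P = ν B)
    (hV : MeasurableSet V) {n : ℕ} {s : Set Ω}
    (hs : MeasurableSet[pastFiltration Ψ hmeas n] s) :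
    ∫⁻ ω in s, ν (backComp Ψ ω (n + 1) ⁻¹' V) ∂P = ∫⁻ ω in s, ν (backComp Ψ ω n ⁻¹' V) ∂P := by
  have hΨ : ∀ k, Measurable (Function.uncurry (Ψ k)) := fun k =>
    measurable_uncurry_of_continuous_right (fun ω => hc ω k) fun x =>
      (measurable_pi_apply x).comp (hmeas k)
  have hinvn : ∀ B : Set ℝ, MeasurableSet B → ∫⁻ ω, ν (Ψ n ω ⁻¹' B) ∂P = ν B := fun B hB =>
    (lintegral_measure_preimage_congr (hΨ n) (hΨ 0) (hident n) hB).trans (hinv B hB)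
  -- `backComp Ψ ω (n + 1) = backComp Ψ ω n ∘ Ψ n ω`, and the first factor only depends on the past.
  have hS : MeasurableSet[(pastFiltration Ψ hmeas n).prod Real.measurableSpace]
      {p : Ω × ℝ | p.1 ∈ s ∧ backComp Ψ p.1 n p.2 ∈ V} :=
    (measurable_fst hs).inter (measurable_backComp_uncurry_pastFiltration hmeas hc n hV)
  have hs' : MeasurableSet s := (pastFiltration Ψ hmeas).le n _ hs
  calc ∫⁻ ω in s, ν (backComp Ψ ω (n + 1) ⁻¹' V) ∂P
      = ∫⁻ ω, ν {x | ω ∈ s ∧ x ∈ backComp Ψ ω (n + 1) ⁻¹' V} ∂P :=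
        (lintegral_measure_setOf_mem_and hs' _).symm
    _ = ∫⁻ ω, ν {x | ω ∈ s ∧ x ∈ backComp Ψ ω n ⁻¹' V} ∂P :=
        lintegral_measure_preimage_prodMk_eq ((pastFiltration Ψ hmeas).le n) (hΨ n)
          (indep_pastFiltration hindep n) hinvn hS
    _ = ∫⁻ ω in s, ν (backComp Ψ ω n ⁻¹' V) ∂P := lintegral_measure_setOf_mem_and hs' _

theorem measure_exists_mapsTo_backComp_mul_le [IsProbabilityMeasure P] [SigmaFinite ν]
    (hmeas : ∀ n, Measurable (Ψ n)) (hindep : iIndepFun Ψ P)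
    (hident : ∀ n, P.map (Ψ n) = P.map (Ψ 0)) (hc : ∀ ω n, Continuous (Ψ n ω))
    (hinv : ∀ B : Set ℝ, MeasurableSet B → ∫⁻ ω, ν (Ψ 0 ω ⁻¹' B) ∂P = ν B)
    (U : Set ℝ) (hV : IsClosed V) :
    P {ω | ∃ n, Set.MapsTo (backComp Ψ ω n) U V} * ν U ≤ ν V := by
  have hentry : ∀ n, MeasurableSet[pastFiltration Ψ hmeas n]
      {ω | Set.MapsTo (backComp Ψ ω n) U V} := fun n =>
    measurableSet_mapsTo (fun ω => continuous_backComp (hc ω) n)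
      (fun _ => (measurable_backComp_uncurry_pastFiltration hmeas hc n).comp
        (measurable_id.prodMk measurable_const)) U hV
  have := measure_iUnion_mul_le_lintegral
    (fun _ _ hs => setLIntegral_measure_backComp_preimage_succ hmeas hindep hident hc hinv
      hV.measurableSet hs) hentry fun _ _ hω => measure_mono hω.subset_preimage
  simpa [Set.ofPred_exists, backComp] using this

end RandomDynamics

theorem invariant_measure_interval_bound_general {Ω : Type*} [MeasurableSpace Ω]
    (P : Measure Ω) [IsProbabilityMeasure P]
    (Ψ : ℕ → Ω → ℝ → ℝ) (hmeas : ∀ n, Measurable (Ψ n))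
    (hindep : iIndepFun Ψ P)
    (hident : ∀ n, Measure.map (Ψ n) P = Measure.map (Ψ 0) P)
    (hcont : ∀ᵐ ω ∂P, ∀ n, Continuous (Ψ n ω))
    (ν : Measure ℝ) [IsLocallyFiniteMeasure ν]
    (hinv : ∀ B : Set ℝ, MeasurableSet B → ∫⁻ ω, ν ((Ψ 0 ω) ⁻¹' B) ∂P = ν B)
    (U V : Set ℝ) (aV bV : ℝ) (hV : V = Set.Icc aV bV) :
    P {ω | ∃ n : ℕ, ∀ x ∈ U, backComp Ψ ω n x ∈ V} * ν U ≤ ν V := by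
  obtain ⟨Φ, hΦmeas, hΦcont, hΦΨ⟩ := exists_continuous_modification hmeas hcont
  have hae : ∀ n, Φ n =ᵐ[P] Ψ n := fun n => hΦΨ.mono fun ω h => h n
  have hevent : {ω | ∃ n : ℕ, ∀ x ∈ U, backComp Ψ ω n x ∈ V}
      =ᵐ[P] {ω | ∃ n, Set.MapsTo (backComp Φ ω n) U V} := by
    filter_upwards [hΦΨ] with ω hω
    change (∃ n : ℕ, ∀ x ∈ U, backComp Ψ ω n x ∈ V) = ∃ n, Set.MapsTo (backComp Φ ω n) U V
    rw [backComp_congr hω]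
    rfl
  rw [measure_congr hevent]
  refine measure_exists_mapsTo_backComp_mul_le hΦmeas ((iIndepFun_congr hae).mpr hindep)
    (fun n => ?_) hΦcont (fun B hB => ?_) U (hV ▸ isClosed_Icc)
  · rw [Measure.map_congr (hae n), Measure.map_congr (hae 0), hident n]
  · rw [← hinv B hB]
    exact lintegral_congr_ae (by filter_upwards [hae 0] with ω h; rw [h])

theorem invariant_measure_interval_bound {Ω : Type*} [MeasurableSpace Ω]
    (P : Measure Ω) [IsProbabilityMeasure P]
    (Ψ : ℕ → Ω → ℝ → ℝ) (hmeas : ∀ n, Measurable (Ψ n))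
    (hindep : iIndepFun Ψ P)
    (hident : ∀ n, Measure.map (Ψ n) P = Measure.map (Ψ 0) P)
    (hcont : ∀ᵐ ω ∂P, ∀ n, Continuous (Ψ n ω))
    (ν : Measure ℝ) [IsLocallyFiniteMeasure ν]
    (hinv : ∀ B : Set ℝ, MeasurableSet B → ∫⁻ ω, ν ((Ψ 0 ω) ⁻¹' B) ∂P = ν B)
    (U V : Set ℝ) (aU bU aV bV : ℝ) (hU : U = Set.Icc aU bU) (hV : V = Set.Icc aV bV) :
    P {ω | ∃ n : ℕ, ∀ x ∈ U, backComp Ψ ω n x ∈ V} * ν U ≤ ν V :=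
  invariant_measure_interval_bound_general P Ψ hmeas hindep hident hcont ν hinv U V aV bV hV
end

section
/- Let (r_j) be i.i.d. nonnegative integer-valued random variables with mean A and E[r₁⁴] < ∞, let i ≥ 0 be another random variable, and fix α > 3/4. Define ψ(x) = i + Σ_{j=1}^x r_j for x ∈ ℕ and B = sup_{x∈ℕ} |ψ(x) − A x| / (x^α + 1). Then there is a constant C_α depending only on α such that E[(log⁺ B)^{2+ε}] ≤ C_α (1 + E[(log⁺ i)^{2+ε}] + E[r₁⁴]) for any 0 < ε ≤ 2. -/
/-!
Centre the offspring numbers, `Y j = r j - A`, and put `S x = Y 0 + ⋯ + Y (x - 1)`. Expanding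
`(S x + Y x) ^ 4` and using independence gives `E (S x) ^ 4 ≤ 3 x² E Y⁴ ≤ 48 x² E r⁴`, so
`G = ∑ₓ (S x / (x ^ α + 1)) ^ 4` has `E G ≤ 48 E r⁴ ∑ₓ x² / (x ^ α + 1) ^ 4`, which is finite
because `4 α - 2 > 1`. Since `|t| ≤ 1 + t ^ 4`, the supremum `B` is at most `|i| + 1 + G`, and
`log y ≤ p y ^ (1 / p)` turns this into `(log⁺ B) ^ p ≤ C_p (1 + (log⁺ i) ^ p + G)` for
`p = 2 + ε`; take expectations.
-/

open MeasureTheory ProbabilityTheory Finset Real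

lemma Real.rpow_add_le_mul_rpow_add_rpow {a b p : ℝ} (ha : 0 ≤ a) (hb : 0 ≤ b) (hp : 1 ≤ p) :
    (a + b) ^ p ≤ 2 ^ (p - 1) * (a ^ p + b ^ p) := by
  lift a to NNReal using ha
  lift b to NNReal using hb
  exact_mod_cast NNReal.rpow_add_le_mul_rpow_add_rpow a b hp

lemma Real.posLog_rpow_le_mul {p y : ℝ} (hp : 0 < p) (hy : 0 ≤ y) : log⁺ y ^ p ≤ p ^ p * y := by
  rcases le_or_gt y 1 with h | h
  · rw [(posLog_eq_zero_iff y).2 (by rwa [abs_of_nonneg hy]), zero_rpow hp.ne']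
    positivity
  · rw [posLog_eq_log (by rw [abs_of_nonneg hy]; exact h.le)]
    calc log y ^ p ≤ (p * y ^ p⁻¹) ^ p := by
          gcongr
          · exact log_nonneg h.le
          · simpa [div_inv_eq_mul, mul_comm] using log_le_rpow_div hy (inv_pos.2 hp)
      _ = p ^ p * y := by rw [mul_rpow hp.le (by positivity), rpow_inv_rpow hy hp.ne']

lemma abs_le_one_add_pow_four (t : ℝ) : |t| ≤ 1 + t ^ 4 := by
  have : t ^ 4 = |t| ^ 4 := (Even.pow_abs (by decide) t).symm
  nlinarith [sq_nonneg (|t| ^ 2 - 1 / 2), sq_nonneg (|t| - 1 / 2)]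

lemma Real.posLog_iSup_abs_add_div_le (i : ℝ) (s c : ℕ → ℝ) (hc : ∀ x, 1 ≤ c x) {G : ℝ}
    (hG : ∀ x, (s x / c x) ^ 4 ≤ G) :
    log⁺ (⨆ x, |i + s x| / c x) ≤ log⁺ i + log⁺ (2 * (1 + G)) := by
  have hG₀ : 0 ≤ G := (by positivity : 0 ≤ (s 0 / c 0) ^ 4).trans (hG 0)
  have hc₀ x : 0 < c x := one_pos.trans_le (hc x)
  have hterm x : |i + s x| / c x ≤ |i| + (1 + G) :=
    calc |i + s x| / c x ≤ |i| / c x + |s x / c x| := by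
          rw [abs_div, abs_of_pos (hc₀ x), ← add_div]
          exact div_le_div_of_nonneg_right (abs_add_le i (s x)) (hc₀ x).le
      _ ≤ |i| + (1 + (s x / c x) ^ 4) :=
          add_le_add (div_le_self (abs_nonneg i) (hc x)) (abs_le_one_add_pow_four (s x / c x))
      _ ≤ |i| + (1 + G) := by linarith [hG x]
  have h1G : 1 ≤ |1 + G| := by rw [abs_of_pos (by positivity)]; linarith
  have h2G : 1 ≤ |2 * (1 + G)| := by rw [abs_of_pos (by positivity)]; linarith
  calc log⁺ (⨆ x, |i + s x| / c x) ≤ log⁺ (|i| + (1 + G)) :=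
        posLog_le_posLog (Real.iSup_nonneg fun x => div_nonneg (abs_nonneg _) (hc₀ x).le)
          (Real.iSup_le hterm (by positivity))
    _ ≤ log 2 + log⁺ |i| + log⁺ (1 + G) := posLog_add
    _ = log⁺ i + log⁺ (2 * (1 + G)) := by
        rw [posLog_abs, posLog_eq_log h1G, posLog_eq_log h2G,
          log_mul (by norm_num) (by positivity)]
        ring

lemma ofReal_posLog_iSup_abs_add_div_rpow_le {p : ℝ} (hp : 1 ≤ p) (i : ℝ) (s c : ℕ → ℝ)
    (hc : ∀ x, 1 ≤ c x) :
    ENNReal.ofReal (log⁺ (⨆ x, |i + s x| / c x) ^ p) ≤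
      ENNReal.ofReal (2 ^ p * (1 + p ^ p)) *
        (1 + ENNReal.ofReal (log⁺ i ^ p) + ∑' x, ENNReal.ofReal ((s x / c x) ^ 4)) := by
  set T := ∑' x, ENNReal.ofReal ((s x / c x) ^ 4)
  have hC : 0 < 2 ^ p * (1 + p ^ p) := by positivity
  rcases eq_or_ne T ⊤ with hT | hT
  · simp [hT, ENNReal.mul_top, hC]
  set G := T.toReal
  have hG x : (s x / c x) ^ 4 ≤ G := (ENNReal.ofReal_le_iff_le_toReal hT).1 (ENNReal.le_tsum x)
  have hG₀ : 0 ≤ G := ENNReal.toReal_nonneg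
  have ha : 0 ≤ log⁺ i ^ p := rpow_nonneg posLog_nonneg p
  have hB : log⁺ (⨆ x, |i + s x| / c x) ^ p ≤
      2 ^ (p - 1) * (log⁺ i ^ p + p ^ p * (2 * (1 + G))) :=
    calc _ ≤ (log⁺ i + log⁺ (2 * (1 + G))) ^ p :=
          rpow_le_rpow posLog_nonneg (posLog_iSup_abs_add_div_le i s c hc hG) (by linarith)
      _ ≤ 2 ^ (p - 1) * (log⁺ i ^ p + log⁺ (2 * (1 + G)) ^ p) :=
          rpow_add_le_mul_rpow_add_rpow posLog_nonneg posLog_nonneg hp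
      _ ≤ _ := by
          gcongr
          exact posLog_rpow_le_mul (by linarith) (by positivity)
  have h2p : (2 : ℝ) ^ p = 2 * 2 ^ (p - 1) := by rw [rpow_sub_one two_ne_zero]; ring
  have hpp : 0 ≤ p ^ p := by positivity
  have h2p₀ : 0 < (2 : ℝ) ^ (p - 1) := by positivity
  calc ENNReal.ofReal (log⁺ (⨆ x, |i + s x| / c x) ^ p)
      ≤ ENNReal.ofReal (2 ^ p * (1 + p ^ p) * (1 + log⁺ i ^ p + G)) := by
        refine ENNReal.ofReal_le_ofReal (hB.trans ?_)
        rw [h2p]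
        nlinarith [mul_nonneg h2p₀.le (mul_nonneg hpp ha), mul_nonneg h2p₀.le hG₀]
    _ = _ := by
        rw [ENNReal.ofReal_mul hC.le, ENNReal.ofReal_add (by positivity) hG₀,
          ENNReal.ofReal_add zero_le_one ha, ENNReal.ofReal_one, ENNReal.ofReal_toReal hT]

lemma summable_sq_div_rpow_add_one_pow_four {α : ℝ} (hα : 3 / 4 < α) :
    Summable fun x : ℕ => (x : ℝ) ^ 2 / ((x : ℝ) ^ α + 1) ^ 4 := by
  refine Summable.of_nonneg_of_le (fun x => by positivity) (fun x => ?_)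
    (summable_nat_rpow.2 (by linarith : 2 - 4 * α < -1))
  rcases (Nat.cast_nonneg (α := ℝ) x).eq_or_lt with hx | hx
  · rw [← hx]
    simp [rpow_nonneg]
  calc (x : ℝ) ^ 2 / ((x : ℝ) ^ α + 1) ^ 4 ≤ (x : ℝ) ^ 2 / ((x : ℝ) ^ α) ^ 4 := by
        have := rpow_pos_of_pos hx α
        gcongr
        linarith
    _ = (x : ℝ) ^ (2 - 4 * α) := by
        rw [rpow_sub hx, ← rpow_natCast, ← rpow_natCast (_ ^ α), ← rpow_mul hx.le]
        norm_num [mul_comm]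

section Moments

variable {Ω : Type*} [MeasurableSpace Ω] {P : Measure Ω}

lemma memLp_four_iff_integrable_pow_four {X : Ω → ℝ} (hX : AEStronglyMeasurable X P) :
    MemLp X 4 P ↔ Integrable (fun ω => X ω ^ 4) P := by
  rw [← integrable_norm_rpow_iff hX (by norm_num) (by norm_num)]
  refine integrable_congr (ae_of_all _ fun ω => ?_)
  simp [← Even.pow_abs (show Even 4 by decide)]

lemma MeasureTheory.MemLp.integrable_pow_of_le [IsFiniteMeasure P] {X : Ω → ℝ} {n m : ℕ}
    (hX : MemLp X n P) (hmn : m ≤ n) : Integrable (fun ω => X ω ^ m) P :=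
  (hX.mono_exponent (by exact_mod_cast hmn)).integrable_norm_pow'.mono'
    (hX.aestronglyMeasurable.pow m) (ae_of_all _ fun ω => by simp [norm_pow])

lemma ProbabilityTheory.iIndepFun.indepFun_sum_range {Y : ℕ → Ω → ℝ} (hY : iIndepFun Y P)
    (hmeas : ∀ j, AEMeasurable (Y j) P) (n : ℕ) :
    IndepFun (fun ω => ∑ j ∈ range n, Y j ω) (Y n) P := by
  simpa [← Finset.sum_fn] using hY.indepFun_finsetSum_of_notMem₀ hmeas notMem_range_self

lemma integral_sum_range_eq_zero {Y : ℕ → Ω → ℝ} (hint : ∀ j, Integrable (Y j) P)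
    (hmean : ∀ j, ∫ ω, Y j ω ∂P = 0) (n : ℕ) : ∫ ω, ∑ j ∈ range n, Y j ω ∂P = 0 := by
  rw [integral_finsetSum _ fun j _ => hint j]
  simp [hmean]

variable [IsProbabilityMeasure P]

lemma sq_integral_le_integral_sq {X : Ω → ℝ} (hX : MemLp X 2 P) :
    (∫ ω, X ω ∂P) ^ 2 ≤ ∫ ω, X ω ^ 2 ∂P := by
  have := variance_nonneg X P
  rw [variance_eq_sub hX] at this
  simpa using this

lemma sq_integral_sq_le_integral_pow_four {X : Ω → ℝ} (hX : MemLp X 4 P) :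
    (∫ ω, X ω ^ 2 ∂P) ^ 2 ≤ ∫ ω, X ω ^ 4 ∂P := by
  have hXsq : MemLp (fun ω => X ω ^ 2) 2 P :=
    (memLp_two_iff_integrable_sq (hX.aestronglyMeasurable.pow 2)).2
      (by simpa [← pow_mul] using hX.integrable_pow_of_le le_rfl)
  simpa [← pow_mul] using sq_integral_le_integral_sq hXsq

lemma integral_sub_integral_pow_four_le {X : Ω → ℝ} (hX : MemLp X 4 P) :
    ∫ ω, (X ω - ∫ ω, X ω ∂P) ^ 4 ∂P ≤ 16 * ∫ ω, X ω ^ 4 ∂P := by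
  set m := ∫ ω, X ω ∂P
  have hX4 : Integrable (fun ω => X ω ^ 4) P := hX.integrable_pow_of_le le_rfl
  have hm4 : m ^ 4 ≤ ∫ ω, X ω ^ 4 ∂P := by
    have h1 := sq_integral_le_integral_sq (hX.mono_exponent (p := 2) (by norm_num))
    have h2 := sq_integral_sq_le_integral_pow_four hX
    nlinarith [sq_nonneg m]
  calc ∫ ω, (X ω - m) ^ 4 ∂P ≤ ∫ ω, (8 * X ω ^ 4 + 8 * m ^ 4) ∂P := by
        refine integral_mono ((hX.sub (memLp_const m)).integrable_pow_of_le le_rfl)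
          ((hX4.const_mul 8).add (integrable_const _)) fun ω => ?_
        nlinarith [sq_nonneg (X ω + m), sq_nonneg (X ω - m), sq_nonneg (X ω ^ 2 - m ^ 2)]
    _ ≤ 16 * ∫ ω, X ω ^ 4 ∂P := by
        rw [integral_add (hX4.const_mul 8) (integrable_const _), integral_const_mul]
        simp only [integral_const, probReal_univ, one_smul]
        linarith

lemma ProbabilityTheory.IndepFun.integral_add_pow {X Y : Ω → ℝ} {n : ℕ}
    (hXY : IndepFun X Y P) (hX : MemLp X n P) (hY : MemLp Y n P) :
    ∫ ω, (X ω + Y ω) ^ n ∂P =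
      ∑ m ∈ range (n + 1), (∫ ω, X ω ^ m ∂P) * (∫ ω, Y ω ^ (n - m) ∂P) * n.choose m := by
  simp_rw [add_pow]
  rw [integral_finsetSum]
  · refine sum_congr rfl fun m _ => ?_
    rw [integral_mul_const, hXY.integral_fun_comp_mul_comp (f := (· ^ m)) (g := (· ^ (n - m)))
      hX.aemeasurable hY.aemeasurable (by fun_prop) (by fun_prop)]
  · intro m hm
    exact ((hXY.comp (measurable_id.pow_const m)
      (measurable_id.pow_const (n - m))).integrable_mul
      (hX.integrable_pow_of_le (by simpa [Nat.lt_succ_iff] using hm))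
      (hY.integrable_pow_of_le (Nat.sub_le n m))).mul_const _

lemma ProbabilityTheory.IndepFun.integral_add_sq {X Y : Ω → ℝ} (hXY : IndepFun X Y P)
    (hX : MemLp X 2 P) (hY : MemLp Y 2 P) (hX0 : ∫ ω, X ω ∂P = 0) (hY0 : ∫ ω, Y ω ∂P = 0) :
    ∫ ω, (X ω + Y ω) ^ 2 ∂P = ∫ ω, X ω ^ 2 ∂P + ∫ ω, Y ω ^ 2 ∂P := by
  rw [hXY.integral_add_pow (n := 2) hX hY]
  simp [sum_range_succ, hX0, hY0, add_comm]

lemma ProbabilityTheory.IndepFun.integral_add_pow_four {X Y : Ω → ℝ} (hXY : IndepFun X Y P)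
    (hX : MemLp X 4 P) (hY : MemLp Y 4 P) (hX0 : ∫ ω, X ω ∂P = 0) (hY0 : ∫ ω, Y ω ∂P = 0) :
    ∫ ω, (X ω + Y ω) ^ 4 ∂P =
      ∫ ω, X ω ^ 4 ∂P + 6 * (∫ ω, X ω ^ 2 ∂P) * (∫ ω, Y ω ^ 2 ∂P) + ∫ ω, Y ω ^ 4 ∂P := by
  rw [hXY.integral_add_pow (n := 4) hX hY]
  norm_num [sum_range_succ, Nat.choose, hX0, hY0]
  ring

lemma integral_sum_range_sq_le {Y : ℕ → Ω → ℝ} (hY : iIndepFun Y P)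
    (hmem : ∀ j, MemLp (Y j) 2 P) (hmean : ∀ j, ∫ ω, Y j ω ∂P = 0) {s : ℝ}
    (hs : ∀ j, ∫ ω, Y j ω ^ 2 ∂P ≤ s) (n : ℕ) :
    ∫ ω, (∑ j ∈ range n, Y j ω) ^ 2 ∂P ≤ n * s := by
  induction n with
  | zero => simp
  | succ n ih =>
    simp_rw [sum_range_succ]
    rw [(hY.indepFun_sum_range (fun j => (hmem j).aemeasurable) n).integral_add_sq
      (memLp_finsetSum _ fun j _ => hmem j) (hmem n)
      (integral_sum_range_eq_zero (fun j => (hmem j).integrable one_le_two) hmean n) (hmean n)]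
    push_cast
    linarith [hs n]

lemma integral_sum_range_pow_four_le {Y : ℕ → Ω → ℝ} (hY : iIndepFun Y P)
    (hmem : ∀ j, MemLp (Y j) 4 P) (hmean : ∀ j, ∫ ω, Y j ω ∂P = 0) {μ₄ : ℝ}
    (h4 : ∀ j, ∫ ω, Y j ω ^ 4 ∂P ≤ μ₄) (n : ℕ) :
    ∫ ω, (∑ j ∈ range n, Y j ω) ^ 4 ∂P ≤ 3 * n ^ 2 * μ₄ := by
  have hμ₄ : 0 ≤ μ₄ := (integral_nonneg fun ω => by positivity).trans (h4 0)
  have h2 j : ∫ ω, Y j ω ^ 2 ∂P ≤ √μ₄ :=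
    Real.le_sqrt_of_sq_le ((sq_integral_sq_le_integral_pow_four (hmem j)).trans (h4 j))
  induction n with
  | zero => simp
  | succ n ih =>
    simp_rw [sum_range_succ]
    rw [(hY.indepFun_sum_range (fun j => (hmem j).aemeasurable) n).integral_add_pow_four
      (memLp_finsetSum _ fun j _ => hmem j) (hmem n)
      (integral_sum_range_eq_zero (fun j => (hmem j).integrable (by norm_num)) hmean n)
      (hmean n)]
    have hS2 := integral_sum_range_sq_le hY (fun j => (hmem j).mono_exponent (by norm_num))
      hmean h2 n
    have hY2 : 0 ≤ ∫ ω, Y n ω ^ 2 ∂P := integral_nonneg fun ω => by positivity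
    have := mul_le_mul hS2 (h2 n) hY2 (by positivity)
    have hsq : √μ₄ * √μ₄ = μ₄ := Real.mul_self_sqrt hμ₄
    push_cast
    nlinarith [h4 n]

lemma lintegral_tsum_sum_range_div_pow_four_le {Y : ℕ → Ω → ℝ} (hY : iIndepFun Y P)
    (hmem : ∀ j, MemLp (Y j) 4 P) (hmean : ∀ j, ∫ ω, Y j ω ∂P = 0) {μ₄ : ℝ}
    (h4 : ∀ j, ∫ ω, Y j ω ^ 4 ∂P ≤ μ₄) (c : ℕ → ℝ) :
    ∫⁻ ω, ∑' x, ENNReal.ofReal (((∑ j ∈ range x, Y j ω) / c x) ^ 4) ∂P ≤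
      ENNReal.ofReal (3 * μ₄) * ∑' x : ℕ, ENNReal.ofReal ((x : ℝ) ^ 2 / c x ^ 4) := by
  have hS x : MemLp (fun ω => ∑ j ∈ range x, Y j ω) 4 P := memLp_finsetSum _ fun j _ => hmem j
  have hμ₄ : 0 ≤ μ₄ := (integral_nonneg fun ω => by positivity).trans (h4 0)
  rw [lintegral_tsum fun x => (((hS x).aemeasurable.div_const _).pow_const 4).ennreal_ofReal,
    ← ENNReal.tsum_mul_left]
  refine ENNReal.tsum_le_tsum fun x => ?_
  simp_rw [div_pow]
  rw [← ofReal_integral_eq_lintegral_ofReal (((hS x).integrable_pow_of_le le_rfl).div_const _)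
      (ae_of_all _ fun ω => by simp only [Pi.zero_apply]; positivity),
    ← ENNReal.ofReal_mul (by linarith), integral_div]
  refine ENNReal.ofReal_le_ofReal ?_
  calc (∫ ω, (∑ j ∈ range x, Y j ω) ^ 4 ∂P) / c x ^ 4 ≤ 3 * x ^ 2 * μ₄ / c x ^ 4 := by
        gcongr
        exact integral_sum_range_pow_four_le hY hmem hmean h4 x
    _ = 3 * μ₄ * ((x : ℝ) ^ 2 / c x ^ 4) := by ring

lemma lintegral_tsum_centered_sum_div_pow_four_le {X : ℕ → Ω → ℝ} (hX : iIndepFun X P)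
    (hident : ∀ j, IdentDistrib (X j) (X 0) P P) {m : ℝ} (hm : ∫ ω, X 0 ω ∂P = m)
    (h4 : Integrable (fun ω => X 0 ω ^ 4) P) (c : ℕ → ℝ) :
    ∫⁻ ω, ∑' x, ENNReal.ofReal (((∑ j ∈ range x, (X j ω - m)) / c x) ^ 4) ∂P ≤
      48 * (∫⁻ ω, ENNReal.ofReal (X 0 ω ^ 4) ∂P) *
        ∑' x : ℕ, ENNReal.ofReal ((x : ℝ) ^ 2 / c x ^ 4) := by
  have hmem₀ : MemLp (X 0) 4 P :=
    (memLp_four_iff_integrable_pow_four (hident 0).aemeasurable_fst.aestronglyMeasurable).2 h4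
  have hmem j : MemLp (fun ω => X j ω - m) 4 P :=
    ((hident j).memLp_iff.2 hmem₀).sub (memLp_const m)
  have hmean j : ∫ ω, (X j ω - m) ∂P = 0 := by
    rw [integral_sub (((hident j).memLp_iff.2 hmem₀).integrable (by norm_num))
      (integrable_const m), (hident j).integral_eq]
    simp [hm]
  have h4' j : ∫ ω, (X j ω - m) ^ 4 ∂P ≤ 16 * ∫ ω, X 0 ω ^ 4 ∂P :=
    ((hident j).comp (u := fun x => (x - m) ^ 4) (by fun_prop)).integral_eq.trans_le
      (hm ▸ integral_sub_integral_pow_four_le hmem₀)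
  calc _ ≤ ENNReal.ofReal (3 * (16 * ∫ ω, X 0 ω ^ 4 ∂P)) *
        ∑' x : ℕ, ENNReal.ofReal ((x : ℝ) ^ 2 / c x ^ 4) :=
        lintegral_tsum_sum_range_div_pow_four_le
          (hX.comp (fun _ x => x - m) fun _ => measurable_id.sub_const m) hmem hmean h4' c
    _ = _ := by
        rw [← mul_assoc, ENNReal.ofReal_mul (by norm_num),
          ofReal_integral_eq_lintegral_ofReal h4 (ae_of_all _ fun ω => by positivity)]
        norm_num

lemma lintegral_le_mul_one_add_add_of_le {f g h : Ω → ENNReal} {C K R : ENNReal} (hC : C ≠ ⊤)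
    (hh : Measurable h) (hfgh : ∀ ω, f ω ≤ C * (1 + g ω + h ω)) (hhR : ∫⁻ ω, h ω ∂P ≤ K * R) :
    ∫⁻ ω, f ω ∂P ≤ C * (1 + K) * (1 + ∫⁻ ω, g ω ∂P + R) :=
  calc ∫⁻ ω, f ω ∂P ≤ C * (1 + ∫⁻ ω, g ω ∂P + ∫⁻ ω, h ω ∂P) := by
        refine (lintegral_mono hfgh).trans_eq ?_
        rw [lintegral_const_mul' _ _ hC, lintegral_add_right _ hh,
          lintegral_add_left measurable_const, lintegral_const, measure_univ, mul_one]
    _ ≤ C * ((1 + ∫⁻ ω, g ω ∂P + R) + K * (1 + ∫⁻ ω, g ω ∂P + R)) := by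
        gcongr C * ?_
        exact add_le_add le_self_add (hhR.trans (by gcongr; exact le_add_self))
    _ = C * (1 + K) * (1 + ∫⁻ ω, g ω ∂P + R) := by ring

end Moments

theorem galton_watson_log_moment_bound_general (α : ℝ) (hα : 3 / 4 < α)
    (ε : ℝ) (hε0 : 0 < ε) :
    ∃ Cα : ENNReal, Cα ≠ ⊤ ∧
      ∀ (Ω : Type) (_ : MeasurableSpace Ω) (P : Measure Ω), IsProbabilityMeasure P →
        ∀ (r : ℕ → Ω → ℕ), (∀ n, Measurable (r n)) →
          iIndepFun r P →
          (∀ n, Measure.map (r n) P = Measure.map (r 0) P) →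
          ∀ (A : ℝ), (∫ ω, (r 0 ω : ℝ) ∂P = A) →
            Integrable (fun ω => (r 0 ω : ℝ) ^ 4) P →
            ∀ (i : Ω → ℝ), Measurable i → (∀ ω, 0 ≤ i ω) →
              (∫⁻ ω, ENNReal.ofReal
                  ((max (Real.log (⨆ x : ℕ,
                      |(i ω + ∑ j ∈ Finset.range x, (r j ω : ℝ)) - A * x| / ((x : ℝ) ^ α + 1)))
                    0) ^ (2 + ε)) ∂P)
                ≤ Cα * (1 + (∫⁻ ω, ENNReal.ofReal ((max (Real.log (i ω)) 0) ^ (2 + ε)) ∂P)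
                          + ∫⁻ ω, ENNReal.ofReal ((r 0 ω : ℝ) ^ 4) ∂P) := by
  set W := ∑' x : ℕ, ENNReal.ofReal ((x : ℝ) ^ 2 / ((x : ℝ) ^ α + 1) ^ 4)
  have hW : W ≠ ⊤ := (summable_sq_div_rpow_add_one_pow_four hα).tsum_ofReal_ne_top
  set C := ENNReal.ofReal (2 ^ (2 + ε) * (1 + (2 + ε) ^ (2 + ε)))
  refine ⟨C * (1 + 48 * W), by finiteness, ?_⟩
  intro Ω _ P _ r hr hindep hmap A hA hr4 i _ _
  set X : ℕ → Ω → ℝ := fun j ω => r j ω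
  have hsum ω x :
      (i ω + ∑ j ∈ range x, (r j ω : ℝ)) - A * x = i ω + ∑ j ∈ range x, (X j ω - A) := by
    simp only [X, sum_sub_distrib, sum_const, card_range, nsmul_eq_mul]
    ring
  simp_rw [hsum, max_comm _ (0 : ℝ), ← posLog_apply]
  refine lintegral_le_mul_one_add_add_of_le ENNReal.ofReal_ne_top
    (Measurable.tsum fun x => by fun_prop)
    (fun ω => ofReal_posLog_iSup_abs_add_div_rpow_le (by linarith) (i ω) _ _
      fun x => le_add_of_nonneg_left (rpow_nonneg x.cast_nonneg α)) ?_
  rw [mul_right_comm]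
  exact lintegral_tsum_centered_sum_div_pow_four_le (X := X)
    (hindep.comp (fun _ k => (k : ℝ)) fun _ => measurable_from_top)
    (fun j => IdentDistrib.comp ⟨(hr j).aemeasurable, (hr 0).aemeasurable, hmap j⟩
      measurable_from_top) hA hr4 _

theorem galton_watson_log_moment_bound (α : ℝ) (hα : 3 / 4 < α)
    (ε : ℝ) (hε0 : 0 < ε) (hε2 : ε ≤ 2) :
    ∃ Cα : ENNReal, Cα ≠ ⊤ ∧
      ∀ (Ω : Type) (_ : MeasurableSpace Ω) (P : Measure Ω), IsProbabilityMeasure P →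
        ∀ (r : ℕ → Ω → ℕ), (∀ n, Measurable (r n)) →
          iIndepFun r P →
          (∀ n, Measure.map (r n) P = Measure.map (r 0) P) →
          ∀ (A : ℝ), (∫ ω, (r 0 ω : ℝ) ∂P = A) →
            Integrable (fun ω => (r 0 ω : ℝ) ^ 4) P →
            ∀ (i : Ω → ℝ), Measurable i → (∀ ω, 0 ≤ i ω) →
              (∫⁻ ω, ENNReal.ofReal
                  ((max (Real.log (⨆ x : ℕ,
                      |(i ω + ∑ j ∈ Finset.range x, (r j ω : ℝ)) - A * x| / ((x : ℝ) ^ α + 1)))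
                    0) ^ (2 + ε)) ∂P)
                ≤ Cα * (1 + (∫⁻ ω, ENNReal.ofReal ((max (Real.log (i ω)) 0) ^ (2 + ε)) ∂P)
                          + ∫⁻ ω, ENNReal.ofReal ((r 0 ω : ℝ) ^ 4) ∂P) :=
  galton_watson_log_moment_bound_general α hα ε hε0
end

section
/- Let g : ℝ → ℝ be integrable with ∫ g = 0 and ∫ |x g(x)| dx < ∞, and set G(x) = ∫_{−∞}^x g. Then |G(x)| ≤ G₁(x) + G₂(x), where G₁(x) = 1_{x≤0} ∫_{−∞}^x |g| and G₂(x) = 1_{x≥0} ∫_x^∞ |g| are monotone (nondecreasing resp. nonincreasing) integrable functions; hence G is directly Riemann integrable. -/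
open MeasureTheory

/-- A function is directly Riemann integrable if the sum over the unit grid of the
suprema of its absolute value is finite. -/
noncomputable def DirectlyRiemannIntegrable (h : ℝ → ℝ) : Prop :=
  Summable (fun n : ℤ => ⨆ x ∈ Set.Icc (n : ℝ) ((n : ℝ) + 1), |h x|)

/-!
Since `∫ g = 0`, the primitive `G x = ∫_{z ≤ x} g = -∫_{z > x} g` is bounded in absolute value
both by the left tail `∫_{z ≤ x} |g|` and by the right tail `∫_{z ≥ x} |g|`. By Tonelli,
`∫_{x ≥ 0} ∫_{z ≥ x} |g z| = ∫ z⁺ |g z| ≤ ∫ |z g z| < ∞`, and symmetrically on the left, so the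
monotone tails are integrable on their half lines. The integral test makes their values at the
integers summable, and on `[n, n + 1]` the function `|G|` is bounded by a tail at an endpoint.
-/

open Set ENNReal

theorem lintegral_Ici_lintegral_Ici {f : ℝ → ℝ≥0∞} (hf : AEMeasurable f) (a : ℝ) :
    ∫⁻ x in Ici a, ∫⁻ z in Ici x, f z = ∫⁻ z, f z * ENNReal.ofReal (z - a) := by
  have hind : ∀ x, ∫⁻ z in Ici x, f z = ∫⁻ z, (Ici x).indicator f z := fun x =>
    (lintegral_indicator measurableSet_Ici f).symm
  simp_rw [hind]
  rw [lintegral_lintegral_swap]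
  · refine lintegral_congr fun z => ?_
    have hsection : (fun x => (Ici x).indicator f z) = (Iic z).indicator fun _ => f z := by
      ext x; by_cases hxz : x ≤ z <;> simp [indicator, hxz]
    rw [hsection, lintegral_indicator_const measurableSet_Iic,
      Measure.restrict_apply measurableSet_Iic, inter_comm, Ici_inter_Iic, Real.volume_Icc,
      mul_comm]
  · exact (hf.comp_snd.indicator (measurableSet_le measurable_fst measurable_snd)).congr
      (Filter.Eventually.of_forall fun p => by simp [indicator, Function.uncurry])

variable {f : ℝ → ℝ}

theorem monotone_setIntegral_Iic (hf : Integrable f) (hf₀ : 0 ≤ f) :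
    Monotone fun x => ∫ z in Iic x, f z := fun _ _ hab =>
  setIntegral_mono_set hf.integrableOn (Filter.Eventually.of_forall hf₀)
    (Iic_subset_Iic.2 hab).eventuallyLE

theorem antitone_setIntegral_Ici (hf : Integrable f) (hf₀ : 0 ≤ f) :
    Antitone fun x => ∫ z in Ici x, f z := fun _ _ hab =>
  setIntegral_mono_set hf.integrableOn (Filter.Eventually.of_forall hf₀)
    (Ici_subset_Ici.2 hab).eventuallyLE

theorem integrableOn_Ici_setIntegral_Ici_abs (hf : Integrable f)
    (hxf : Integrable fun x => x * f x) :
    IntegrableOn (fun x => ∫ z in Ici x, |f z|) (Ici 0) := by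
  refine ⟨(antitone_setIntegral_Ici hf.abs fun _ => abs_nonneg _).measurable.aestronglyMeasurable,
    ?_⟩
  rw [hasFiniteIntegral_iff_ofReal (Filter.Eventually.of_forall fun x =>
    setIntegral_nonneg measurableSet_Ici fun z _ => abs_nonneg (f z))]
  calc ∫⁻ x in Ici 0, ENNReal.ofReal (∫ z in Ici x, |f z|)
      = ∫⁻ x in Ici 0, ∫⁻ z in Ici x, ENNReal.ofReal |f z| :=
        lintegral_congr fun x => ofReal_integral_eq_lintegral_ofReal hf.abs.integrableOn
          (Filter.Eventually.of_forall fun z => abs_nonneg _)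
    _ = ∫⁻ z, ENNReal.ofReal |f z| * ENNReal.ofReal (z - 0) :=
        lintegral_Ici_lintegral_Ici hf.aemeasurable.abs.ennreal_ofReal 0
    _ ≤ ∫⁻ z, ‖z * f z‖ₑ := lintegral_mono fun z => by
        rw [sub_zero, Real.enorm_eq_ofReal_abs, abs_mul, mul_comm,
          ENNReal.ofReal_mul (abs_nonneg _)]
        gcongr
        exact le_abs_self z
    _ < ⊤ := hxf.hasFiniteIntegral

theorem integrableOn_Iic_setIntegral_Iic_abs (hf : Integrable f)
    (hxf : Integrable fun x => x * f x) :
    IntegrableOn (fun x => ∫ z in Iic x, |f z|) (Iic 0) := by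
  have hxf' : Integrable fun x => x * f (-x) := by
    simpa using (hxf.comp_neg).neg
  have := (integrableOn_Ici_setIntegral_Ici_abs hf.comp_neg hxf').comp_neg
  rw [neg_Ici, neg_zero] at this
  refine this.congr_fun (fun x _ => ?_) measurableSet_Iic
  dsimp only
  rw [integral_Ici_eq_integral_Ioi, integral_comp_neg_Ioi (-x) fun z => |f z|, neg_neg]

theorem abs_setIntegral_Iic_le_setIntegral_Ici_abs (hf : Integrable f) (hf₀ : ∫ x, f x = 0)
    (x : ℝ) : |∫ z in Iic x, f z| ≤ ∫ z in Ici x, |f z| := by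
  have hsplit : ∫ z in Iic x, f z = -∫ z in Ioi x, f z := by
    rw [eq_neg_iff_add_eq_zero, ← hf₀]
    exact intervalIntegral.integral_Iic_add_Ioi hf.integrableOn hf.integrableOn
  rw [hsplit, abs_neg, integral_Ici_eq_integral_Ioi]
  exact abs_integral_le_integral_abs

theorem directlyRiemannIntegrable_of_forall_abs_le {h : ℝ → ℝ} {c : ℤ → ℝ} (hc : Summable c)
    (hle : ∀ n : ℤ, ∀ x ∈ Icc (n : ℝ) (n + 1), |h x| ≤ c n) : DirectlyRiemannIntegrable h := by
  refine hc.of_nonneg_of_le (fun n => Real.iSup_nonneg fun x => Real.iSup_nonneg fun _ =>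
    abs_nonneg _) fun n => ?_
  have hc₀ : 0 ≤ c n := (abs_nonneg _).trans (hle n n (left_mem_Icc.2 (by linarith)))
  exact Real.iSup_le (fun x => Real.iSup_le (hle n x) hc₀) hc₀

theorem DirectlyRiemannIntegrable.of_abs_le_monotoneOn_antitoneOn {h G₁ G₂ : ℝ → ℝ}
    (hG₁ : MonotoneOn G₁ (Iic 0)) (hG₂ : AntitoneOn G₂ (Ici 0))
    (hi₁ : IntegrableOn G₁ (Iic 0)) (hi₂ : IntegrableOn G₂ (Ici 0))
    (hle₁ : ∀ x ≤ 0, |h x| ≤ G₁ x) (hle₂ : ∀ x, 0 ≤ x → |h x| ≤ G₂ x) :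
    DirectlyRiemannIntegrable h := by
  have hs₂ : Summable fun n : ℕ => G₂ n :=
    hG₂.summable_of_integrableOn_Ioi_zero (hi₂.mono_set Ioi_subset_Ici_self)
      fun t ht => (abs_nonneg _).trans (hle₂ t ht.le)
  have hs₁ : Summable fun n : ℕ => G₁ (-n) := by
    have hanti : AntitoneOn (fun x => G₁ (-x)) (Ici 0) := fun x hx y hy hxy =>
      hG₁ (neg_nonpos.2 hy : -y ≤ 0) (neg_nonpos.2 hx : -x ≤ 0) (neg_le_neg hxy)
    have hi : IntegrableOn (fun x => G₁ (-x)) (Ici 0) :=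
      IntegrableOn.comp_neg_Ici (by rwa [neg_zero])
    exact hanti.summable_of_integrableOn_Ioi_zero (hi.mono_set Ioi_subset_Ici_self)
      fun t ht => (abs_nonneg _).trans (hle₁ (-t) (by linarith [ht.out]))
  refine directlyRiemannIntegrable_of_forall_abs_le
    (c := fun n => if 0 ≤ n then G₂ n else G₁ (n + 1))
    (.of_nat_of_neg_add_one (by simpa using hs₂) (hs₁.congr fun n => ?_)) fun n x hx => ?_
  · rw [if_neg (by omega)]
    push_cast
    ring_nf
  split_ifs with hn
  · have hn' : (0 : ℝ) ≤ n := by exact_mod_cast hn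
    exact (hle₂ x (hn'.trans hx.1)).trans (hG₂ hn' (hn'.trans hx.1) hx.1)
  · have hn' : (n : ℝ) + 1 ≤ 0 := by exact_mod_cast Int.add_one_le_iff.2 (not_le.1 hn)
    exact (hle₁ x (hx.2.trans hn')).trans (hG₁ (hx.2.trans hn') hn' hx.2)

theorem primitive_directly_riemann_integrable (g : ℝ → ℝ) (hg : Integrable g)
    (h0 : ∫ x, g x = 0) (hxg : Integrable (fun x => x * g x)) :
    (∀ x : ℝ, |∫ z in Set.Iic x, g z| ≤
        Set.indicator (Set.Iic 0) (fun x => ∫ z in Set.Iic x, |g z|) x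
          + Set.indicator (Set.Ici 0) (fun x => ∫ z in Set.Ici x, |g z|) x) ∧
      MonotoneOn (fun x => ∫ z in Set.Iic x, |g z|) (Set.Iic 0) ∧
      AntitoneOn (fun x => ∫ z in Set.Ici x, |g z|) (Set.Ici 0) ∧
      Integrable (Set.indicator (Set.Iic 0) (fun x => ∫ z in Set.Iic x, |g z|)) ∧
      Integrable (Set.indicator (Set.Ici 0) (fun x => ∫ z in Set.Ici x, |g z|)) ∧
      DirectlyRiemannIntegrable (fun x => ∫ z in Set.Iic x, g z) := by
  have hle₁ (x : ℝ) : |∫ z in Iic x, g z| ≤ ∫ z in Iic x, |g z| := abs_integral_le_integral_abs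
  have hle₂ := abs_setIntegral_Iic_le_setIntegral_Ici_abs hg h0
  have hG₁ := monotone_setIntegral_Iic hg.abs fun z => abs_nonneg (g z)
  have hG₂ := antitone_setIntegral_Ici hg.abs fun z => abs_nonneg (g z)
  have hi₁ := integrableOn_Iic_setIntegral_Iic_abs hg hxg
  have hi₂ := integrableOn_Ici_setIntegral_Ici_abs hg hxg
  refine ⟨fun x => ?_, hG₁.monotoneOn _, hG₂.antitoneOn _,
    (integrable_indicator_iff measurableSet_Iic).2 hi₁,
    (integrable_indicator_iff measurableSet_Ici).2 hi₂,
    .of_abs_le_monotoneOn_antitoneOn (hG₁.monotoneOn _) (hG₂.antitoneOn _) hi₁ hi₂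
      (fun x _ => hle₁ x) fun x _ => hle₂ x⟩
  rcases le_total x 0 with hx | hx
  · rw [indicator_of_mem (mem_Iic.2 hx)]
    exact le_add_of_le_of_nonneg (hle₁ x) <| indicator_nonneg (fun y _ =>
      setIntegral_nonneg measurableSet_Ici fun z _ => abs_nonneg (g z)) x
  · rw [indicator_of_mem (mem_Ici.2 hx) (fun x => ∫ z in Ici x, |g z|)]
    refine le_add_of_nonneg_of_le ?_ (hle₂ x)
    exact indicator_nonneg (fun y _ =>
      setIntegral_nonneg measurableSet_Iic fun z _ => abs_nonneg (g z)) x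
end

section
/- Let u₁, u₂, … be i.i.d. nonnegative integrable real random variables (the aperiodic, ≥ 0 case), and consider the reflected random walk Y_n^x = |Y_{n−1}^x − u_n| on [0,∞) with Y₀^x = x. Then the measure ν(dx) = (1 − F(x)) dx on [0,∞), where F is the distribution function of u₁, is invariant: ∫∫ f(|x − y|) ν(dx) μ(dy) = ∫ f dν for every nonnegative measurable f, where μ is the law of u₁. -/
/-!
Since `1 - F x = μ (Ioi x)`, Tonelli turns `∫ g dν` into `∫ (∫_{[0,u)} g) dμ(u)`. For `y ≥ 0` the
map `x ↦ |x - y|` sends the part `x < y` of `[0,u)` onto `(y - u, y] ∩ (0, ∞)` and the part `x ≥ y`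
onto `[0, u - y)`. Integrating in `(u, y)` against `μ ⊗ μ` and exchanging `u` and `y` in the first
piece turns it into `(u - y, u] ∩ (0, ∞)`, which together with `[0, u - y)` is `[0, u)` up to a
null set.
-/

open MeasureTheory Set Function
open scoped ENNReal

theorem measurable_setLIntegral_preimage_prodMk {α β : Type*} [MeasurableSpace α]
    [MeasurableSpace β] {ν : Measure β} [SFinite ν] {s : Set (α × β)} (hs : MeasurableSet s)
    (f : β → ℝ≥0∞) : Measurable fun a => ∫⁻ b in Prod.mk a ⁻¹' s, f b ∂ν := by
  simp_rw [← withDensity_apply' f]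
  exact measurable_measure_prodMk_left hs

theorem lintegral_lintegral_add_swap {α : Type*} [MeasurableSpace α] {μ : Measure α} [SFinite μ]
    {h : α → α → ℝ≥0∞} (hh : Measurable (uncurry h)) (g : α → α → ℝ≥0∞) :
    ∫⁻ x, ∫⁻ y, (h y x + g x y) ∂μ ∂μ = ∫⁻ x, ∫⁻ y, (h x y + g x y) ∂μ ∂μ := by
  have hswap : Measurable (uncurry fun x y => h y x) := hh.comp measurable_swap
  have hswapInt : Measurable fun x => ∫⁻ y, h y x ∂μ := hswap.lintegral_prod_right'
  have hInt : Measurable fun x => ∫⁻ y, h x y ∂μ := hh.lintegral_prod_right'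
  calc ∫⁻ x, ∫⁻ y, (h y x + g x y) ∂μ ∂μ
      = ∫⁻ x, ∫⁻ y, h y x ∂μ ∂μ + ∫⁻ x, ∫⁻ y, g x y ∂μ ∂μ := by
        rw [← lintegral_add_left hswapInt]
        exact lintegral_congr fun x => lintegral_add_left hh.of_uncurry_right _
    _ = ∫⁻ x, ∫⁻ y, h x y ∂μ ∂μ + ∫⁻ x, ∫⁻ y, g x y ∂μ ∂μ := by
        rw [lintegral_lintegral_swap hswap.aemeasurable]
    _ = ∫⁻ x, ∫⁻ y, (h x y + g x y) ∂μ ∂μ := by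
        rw [← lintegral_add_left hInt]
        exact lintegral_congr fun x => (lintegral_add_left hh.of_uncurry_left _).symm

theorem ofReal_one_sub_toReal_measure_Iic (μ : Measure ℝ) [IsProbabilityMeasure μ] (x : ℝ) :
    ENNReal.ofReal (1 - (μ (Iic x)).toReal) = μ (Ioi x) := by
  rw [← compl_Iic, prob_compl_eq_one_sub measurableSet_Iic, ← ENNReal.toReal_one,
    ← ENNReal.toReal_sub_of_le prob_le_one ENNReal.one_ne_top, ENNReal.ofReal_toReal (by simp)]

theorem lintegral_withDensity_measure_Ioi (ν μ : Measure ℝ) [SFinite ν] [SFinite μ]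
    {g : ℝ → ℝ≥0∞} (hg : Measurable g) :
    ∫⁻ x, g x ∂(ν.withDensity fun x => μ (Ioi x)) = ∫⁻ u, ∫⁻ x in Iio u, g x ∂ν ∂μ := by
  have hIoi : Measurable fun x => μ (Ioi x) :=
    Antitone.measurable fun _ _ hab => measure_mono (Ioi_subset_Ioi hab)
  have hmeas : Measurable (uncurry fun x u => (Iio u).indicator g x) :=
    (hg.comp measurable_fst).indicator (measurableSet_lt measurable_fst measurable_snd)
  calc ∫⁻ x, g x ∂(ν.withDensity fun x => μ (Ioi x))
      = ∫⁻ x, ∫⁻ u, (Iio u).indicator g x ∂μ ∂ν := by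
        rw [lintegral_withDensity_eq_lintegral_mul _ hIoi hg]
        refine lintegral_congr fun x => ?_
        rw [Pi.mul_apply, mul_comm, ← lintegral_indicator_const measurableSet_Ioi]
        rfl
    _ = ∫⁻ u, ∫⁻ x in Iio u, g x ∂ν ∂μ := by
        simp_rw [lintegral_lintegral_swap hmeas.aemeasurable, lintegral_indicator measurableSet_Iio]

theorem setLIntegral_Ico_abs_sub (f : ℝ → ℝ≥0∞) {u y : ℝ} (hy : 0 ≤ y) :
    ∫⁻ x in Ico 0 u, f |x - y| =
      (∫⁻ z in Ioc (y - u) y ∩ Ioi 0, f z) + ∫⁻ z in Ico 0 (u - y), f z := by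
  have hbelow : Ico 0 u ∩ Iio y = (y - ·) ⁻¹' (Ioc (y - u) y ∩ Ioi 0) := by
    ext x
    simp only [mem_inter_iff, mem_Ico, mem_Iio, mem_preimage, mem_Ioc, mem_Ioi]
    constructor <;> rintro ⟨⟨_, _⟩, _⟩ <;> exact ⟨⟨by linarith, by linarith⟩, by linarith⟩
  have habove : Ico 0 u \ Iio y = (· - y) ⁻¹' Ico 0 (u - y) := by
    ext x
    simp only [mem_sdiff, mem_Ico, mem_Iio, not_lt, mem_preimage]
    constructor
    · rintro ⟨⟨_, _⟩, _⟩
      constructor <;> linarith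
    · rintro ⟨_, _⟩
      exact ⟨⟨by linarith, by linarith⟩, by linarith⟩
  have hlow : ∫⁻ x in Ico 0 u ∩ Iio y, f |x - y| = ∫⁻ z in Ioc (y - u) y ∩ Ioi 0, f z :=
    calc ∫⁻ x in Ico 0 u ∩ Iio y, f |x - y|
        = ∫⁻ x in Ico 0 u ∩ Iio y, f (y - x) :=
          setLIntegral_congr_fun (measurableSet_Ico.inter measurableSet_Iio) fun x hx => by
            rw [abs_sub_comm, abs_of_pos (sub_pos.2 hx.2)]
      _ = ∫⁻ z in Ioc (y - u) y ∩ Ioi 0, f z := by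
          rw [hbelow]
          exact (Measure.measurePreserving_sub_left volume y).setLIntegral_comp_preimage_emb
            (MeasurableEquiv.subLeft y).measurableEmbedding f _
  have hhigh : ∫⁻ x in Ico 0 u \ Iio y, f |x - y| = ∫⁻ z in Ico 0 (u - y), f z :=
    calc ∫⁻ x in Ico 0 u \ Iio y, f |x - y|
        = ∫⁻ x in Ico 0 u \ Iio y, f (x - y) :=
          setLIntegral_congr_fun (measurableSet_Ico.diff measurableSet_Iio) fun x hx => by
            rw [abs_of_nonneg (sub_nonneg.2 (not_lt.1 hx.2))]
      _ = ∫⁻ z in Ico 0 (u - y), f z := by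
          rw [habove]
          exact (measurePreserving_sub_right volume y).setLIntegral_comp_preimage_emb
            (MeasurableEquiv.subRight y).measurableEmbedding f _
  rw [← lintegral_inter_add_sdiff _ _ measurableSet_Iio, hlow, hhigh]

theorem setLIntegral_Ioc_inter_Ioi_add_setLIntegral_Ico (f : ℝ → ℝ≥0∞) {u y : ℝ} (hy : 0 ≤ y) :
    (∫⁻ z in Ioc (u - y) u ∩ Ioi 0, f z) + ∫⁻ z in Ico 0 (u - y), f z = ∫⁻ z in Ico 0 u, f z := by
  have hdisj : Disjoint (Ioc (u - y) u ∩ Ioi 0) (Ico 0 (u - y)) :=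
    disjoint_left.2 fun z hz hz' => hz.1.1.not_gt hz'.2
  rw [← lintegral_union measurableSet_Ico hdisj]
  refine setLIntegral_congr (Filter.eventuallyEq_set.2 ?_)
  have hfin : ∀ᵐ z : ℝ, z ∉ ({0, u - y, u} : Set ℝ) :=
    measure_eq_zero_iff_ae_notMem.1 ((toFinite _).measure_zero volume)
  filter_upwards [hfin] with z hz
  simp only [mem_insert_iff, mem_singleton_iff, not_or] at hz
  simp only [mem_union, mem_inter_iff, mem_Ioc, mem_Ioi, mem_Ico]
  grind

theorem lintegral_lintegral_setLIntegral_Ico_abs_sub (μ : Measure ℝ) [IsProbabilityMeasure μ]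
    (hμ : ∀ᵐ y ∂μ, 0 ≤ y) (f : ℝ → ℝ≥0∞) :
    ∫⁻ y, ∫⁻ u, ∫⁻ x in Ico 0 u, f |x - y| ∂volume ∂μ ∂μ =
      ∫⁻ u, ∫⁻ x in Ico 0 u, f x ∂volume ∂μ := by
  set A : ℝ → ℝ → ℝ≥0∞ := fun u y => ∫⁻ z in Ioc (y - u) y ∩ Ioi 0, f z
  have hA : Measurable (uncurry A) :=
    measurable_setLIntegral_preimage_prodMk
      (s := {q : (ℝ × ℝ) × ℝ | (q.1.2 - q.1.1 < q.2 ∧ q.2 ≤ q.1.2) ∧ 0 < q.2}) (by measurability) f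
  calc ∫⁻ y, ∫⁻ u, ∫⁻ x in Ico 0 u, f |x - y| ∂volume ∂μ ∂μ
      = ∫⁻ y, ∫⁻ u, (A u y + ∫⁻ z in Ico 0 (u - y), f z ∂volume) ∂μ ∂μ :=
        lintegral_congr_ae <| hμ.mono fun y hy =>
          lintegral_congr fun u => setLIntegral_Ico_abs_sub f hy
    _ = ∫⁻ y, ∫⁻ u, (A y u + ∫⁻ z in Ico 0 (u - y), f z ∂volume) ∂μ ∂μ :=
        lintegral_lintegral_add_swap hA _
    _ = ∫⁻ _y, ∫⁻ u, ∫⁻ x in Ico 0 u, f x ∂volume ∂μ ∂μ :=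
        lintegral_congr_ae <| hμ.mono fun y hy =>
          lintegral_congr fun u => setLIntegral_Ioc_inter_Ioi_add_setLIntegral_Ico f hy
    _ = ∫⁻ u, ∫⁻ x in Ico 0 u, f x ∂volume ∂μ := by rw [lintegral_const, measure_univ, mul_one]

theorem feller_invariant_measure_reflected_walk_general
    (μ : Measure ℝ) [IsProbabilityMeasure μ]
    (hpos : μ (Set.Iio 0) = 0) :
    ∀ f : ℝ → ENNReal, Measurable f →
      ∫⁻ y, ∫⁻ x, f |x - y|
          ∂((volume.restrict (Set.Ici (0 : ℝ))).withDensity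
              (fun x => ENNReal.ofReal (1 - (μ (Set.Iic x)).toReal))) ∂μ
        = ∫⁻ x, f x
          ∂((volume.restrict (Set.Ici (0 : ℝ))).withDensity
              (fun x => ENNReal.ofReal (1 - (μ (Set.Iic x)).toReal))) := by
  intro f hf
  have hν : ∀ g : ℝ → ℝ≥0∞, Measurable g →
      ∫⁻ x, g x ∂((volume.restrict (Ici 0)).withDensity
          fun x => ENNReal.ofReal (1 - (μ (Iic x)).toReal)) =
        ∫⁻ u, ∫⁻ x in Ico 0 u, g x ∂volume ∂μ := fun g hg => by
    simp only [ofReal_one_sub_toReal_measure_Iic, lintegral_withDensity_measure_Ioi _ _ hg,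
      Measure.restrict_restrict measurableSet_Iio, Iio_inter_Ici]
  have hμ : ∀ᵐ y ∂μ, 0 ≤ y := (measure_eq_zero_iff_ae_notMem.1 hpos).mono fun _ h => not_lt.1 h
  rw [lintegral_congr fun y => hν (fun x => f |x - y|) (by fun_prop), hν f hf]
  exact lintegral_lintegral_setLIntegral_Ico_abs_sub μ hμ f

theorem feller_invariant_measure_reflected_walk
    (μ : Measure ℝ) [IsProbabilityMeasure μ]
    (hpos : μ (Set.Iio 0) = 0) (hint : Integrable (fun y : ℝ => |y|) μ) :
    ∀ f : ℝ → ENNReal, Measurable f →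
      ∫⁻ y, ∫⁻ x, f |x - y|
          ∂((volume.restrict (Set.Ici (0 : ℝ))).withDensity
              (fun x => ENNReal.ofReal (1 - (μ (Set.Iic x)).toReal))) ∂μ
        = ∫⁻ x, f x
          ∂((volume.restrict (Set.Ici (0 : ℝ))).withDensity
              (fun x => ENNReal.ofReal (1 - (μ (Set.Iic x)).toReal))) :=
  feller_invariant_measure_reflected_walk_general μ hpos
end
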